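/- arXiv:1910.00766 — 4 statements merged into one kernel-verified Lean document; each statement's English description precedes it below -/
import Mathlib

section
/- For every κ > 0 there is a constant C_κ ∈ ℝ such that for all β > 0 and N ∈ ℕ with βN ≤ κ, the partition function satisfies (log Z_{β,N})/N ≥ C_κ. -/
open MeasureTheory Real Filter Finset

noncomputable section

/-- The unnormalized density of the beta ensemble with potential `V`,
inverse temperature `β` and `N` particles. -/
def betaWeight (V : ℝ → ℝ) (β : ℝ) (N : ℕ) (lam : Fin N → ℝ) : ℝ :=
  (∏ i : Fin N, ∏ j ∈ Finset.Ioi i, |lam j - lam i| ^ β) * Real.exp (- ∑ i, V (lam i))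

/-- The partition function `Z_{β,N}`. -/
def Zpart (V : ℝ → ℝ) (β : ℝ) (N : ℕ) : ℝ :=
  ∫ lam : Fin N → ℝ, betaWeight V β N lam

/-!
Adding a particle at `t` to a configuration `lam` of `N` particles multiplies the weight by
`∏ᵢ |lam i - t| ^ β * exp (-V t)`. Since `|u| ^ β ≥ exp (-β (log |u|)⁻)` and `(log |u|)⁻` has
integral `2`, Jensen's inequality for the probability density `exp (-V) / z` bounds the
`t`-integral of this factor below by `z * exp (-2 β N sup (exp (-V)) / z)`, which is at least a
constant `c > 0` as soon as `β N ≤ κ`. Hence `Z (N + 1) ≥ c Z N`, so `Z N ≥ c ^ N`.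
Fubini is justified because the growth of `V` makes `(1 + x²) ^ (κ / 2) * exp (-V)` integrable,
and this dominates the weight through `|a - b|² ≤ (1 + a²) (1 + b²)`.
-/

namespace BetaEnsemble

def negLogPart (u : ℝ) : ℝ := max (-log |u|) 0

lemma negLogPart_nonneg (u : ℝ) : 0 ≤ negLogPart u := le_max_right _ _

@[fun_prop]
lemma measurable_negLogPart : Measurable negLogPart :=
  (measurable_log.comp measurable_abs).neg.max measurable_const

lemma negLogPart_eq_indicator :
    negLogPart = Set.indicator (Set.Icc (-1) 1) (fun u => -log u) := by
  ext u
  by_cases hu : |u| ≤ 1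
  · rw [Set.indicator_of_mem (show u ∈ Set.Icc (-1) 1 from abs_le.1 hu), negLogPart,
      max_eq_left (neg_nonneg.2 (log_nonpos (abs_nonneg u) hu)), log_abs]
  · rw [Set.indicator_of_notMem (show u ∉ Set.Icc (-1) 1 from fun h => hu (abs_le.2 h)),
      negLogPart, max_eq_right (neg_nonpos.2 (log_nonneg (not_le.1 hu).le))]

lemma integrable_negLogPart : Integrable negLogPart := by
  rw [negLogPart_eq_indicator, integrable_indicator_iff measurableSet_Icc,
    ← intervalIntegrable_iff_integrableOn_Icc_of_le (by norm_num)]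
  exact (intervalIntegral.intervalIntegrable_log').neg

lemma integral_negLogPart : ∫ u, negLogPart u = 2 := by
  rw [negLogPart_eq_indicator, integral_indicator measurableSet_Icc, integral_Icc_eq_integral_Ioc,
    ← intervalIntegral.integral_of_le (by norm_num), intervalIntegral.integral_neg, integral_log]
  norm_num

lemma exp_neg_mul_negLogPart_le {β u : ℝ} (hβ : 0 ≤ β) (hu : u ≠ 0) :
    exp (-(β * negLogPart u)) ≤ |u| ^ β := by
  rw [rpow_def_of_pos (abs_pos.2 hu), exp_le_exp, negLogPart, mul_comm]
  nlinarith [le_max_left (-log |u|) 0]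

/-- Jensen's inequality for `exp` against the weight `g`, via the tangent line `1 + x ≤ exp x`. -/
theorem integral_mul_exp_neg_integral_div_le {α : Type*} [MeasurableSpace α] {μ : Measure α}
    {f g : α → ℝ} (hg0 : 0 ≤ g) (hg : Integrable g μ) (hfm : AEStronglyMeasurable f μ)
    (hf0 : 0 ≤ f) (hfg : Integrable (fun x => f x * g x) μ) :
    (∫ x, g x ∂μ) * exp (-((∫ x, f x * g x ∂μ) / ∫ x, g x ∂μ))
      ≤ ∫ x, exp (-f x) * g x ∂μ := by
  set z := ∫ x, g x ∂μ
  set a := (∫ x, f x * g x ∂μ) / z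
  have hexp : Integrable (fun x => exp (-f x) * g x) μ := by
    refine hg.mono' ((continuous_exp.comp_aestronglyMeasurable hfm.neg).mul hg.1) ?_
    refine ae_of_all _ fun x => ?_
    rw [norm_mul, norm_of_nonneg (exp_pos _).le, norm_of_nonneg (hg0 x)]
    exact mul_le_of_le_one_left (hg0 x) (exp_le_one_iff.2 (neg_nonpos.2 (hf0 x)))
  rcases (integral_nonneg hg0 : 0 ≤ z).eq_or_lt with hz | hz
  · rw [show z = 0 from hz.symm, zero_mul]
    exact integral_nonneg fun x => mul_nonneg (exp_pos _).le (hg0 x)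
  have htangent : ∀ x, exp (-a) * ((1 + a) * g x - f x * g x) ≤ exp (-f x) * g x := by
    intro x
    have h := mul_le_mul_of_nonneg_left (add_one_le_exp (a - f x)) (exp_pos (-a)).le
    rw [← exp_add, show -a + (a - f x) = -f x by ring] at h
    calc exp (-a) * ((1 + a) * g x - f x * g x) = exp (-a) * (a - f x + 1) * g x := by ring
      _ ≤ exp (-f x) * g x := mul_le_mul_of_nonneg_right h (hg0 x)
  calc z * exp (-a) = ∫ x, exp (-a) * ((1 + a) * g x - f x * g x) ∂μ := by
        rw [integral_const_mul, integral_sub (hg.const_mul _) hfg, integral_const_mul,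
          ← div_mul_cancel₀ (∫ x, f x * g x ∂μ) hz.ne']
        ring
    _ ≤ ∫ x, exp (-f x) * g x ∂μ :=
        integral_mono (((hg.const_mul _).sub hfg).const_mul _) hexp htangent

section Weight

variable {g : ℝ → ℝ} {M : ℝ}

lemma integrable_negLogPart_sub_mul (hg : AEStronglyMeasurable g) (hg0 : 0 ≤ g)
    (hgM : ∀ t, g t ≤ M) (y : ℝ) : Integrable (fun t => negLogPart (y - t) * g t) := by
  refine ((integrable_negLogPart.comp_sub_left y).const_mul M).mono'
    ((by fun_prop : Measurable fun t => negLogPart (y - t)).aestronglyMeasurable.mul hg)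
    (ae_of_all _ fun t => ?_)
  rw [norm_of_nonneg (mul_nonneg (negLogPart_nonneg _) (hg0 t)), mul_comm]
  exact mul_le_mul_of_nonneg_right (hgM t) (negLogPart_nonneg _)

lemma integral_negLogPart_sub_mul_le (hg : AEStronglyMeasurable g) (hg0 : 0 ≤ g)
    (hgM : ∀ t, g t ≤ M) (y : ℝ) : ∫ t, negLogPart (y - t) * g t ≤ 2 * M := by
  calc ∫ t, negLogPart (y - t) * g t ≤ ∫ t, M * negLogPart (y - t) := by
        refine integral_mono (integrable_negLogPart_sub_mul hg hg0 hgM y)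
          ((integrable_negLogPart.comp_sub_left y).const_mul M) fun t => ?_
        rw [mul_comm]
        exact mul_le_mul_of_nonneg_right (hgM t) (negLogPart_nonneg _)
    _ = 2 * M := by
        rw [integral_const_mul, integral_sub_left_eq_self negLogPart, integral_negLogPart, mul_comm]

theorem mul_exp_le_integral_prod_abs_sub_rpow_mul (hg0 : 0 ≤ g) (hgM : ∀ t, g t ≤ M)
    (hg : Integrable g) {β : ℝ} (hβ : 0 ≤ β) {n : ℕ} (y : Fin n → ℝ)
    (hint : Integrable (fun t => (∏ i, |y i - t| ^ β) * g t)) :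
    (∫ t, g t) * exp (-(2 * β * n * M / ∫ t, g t)) ≤ ∫ t, (∏ i, |y i - t| ^ β) * g t := by
  set z := ∫ t, g t
  have hz : 0 ≤ z := integral_nonneg hg0
  set S := fun t => β * ∑ i, negLogPart (y i - t)
  have hSg : Integrable (fun t => S t * g t) := by
    simp only [S, mul_assoc, sum_mul]
    exact (integrable_finsetSum _ fun i _ =>
      integrable_negLogPart_sub_mul hg.1 hg0 hgM (y i)).const_mul β
  have hSg_le : ∫ t, S t * g t ≤ 2 * β * n * M := by
    calc ∫ t, S t * g t = β * ∑ i, ∫ t, negLogPart (y i - t) * g t := by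
          simp only [S, mul_assoc, sum_mul]
          rw [integral_const_mul, integral_finsetSum _ fun i _ =>
            integrable_negLogPart_sub_mul hg.1 hg0 hgM (y i)]
      _ ≤ β * ∑ _i : Fin n, 2 * M := by
          gcongr with i
          exact integral_negLogPart_sub_mul_le hg.1 hg0 hgM (y i)
      _ = 2 * β * n * M := by simp; ring
  have hlower : ∀ᵐ t, exp (-S t) * g t ≤ (∏ i, |y i - t| ^ β) * g t := by
    filter_upwards [measure_eq_zero_iff_ae_notMem.1 ((Set.finite_range y).measure_zero volume)]
      with t ht
    refine mul_le_mul_of_nonneg_right ?_ (hg0 t)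
    rw [show S t = β * _ from rfl, mul_sum, ← sum_neg_distrib, exp_sum]
    exact prod_le_prod (fun i _ => (exp_pos _).le) fun i _ =>
      exp_neg_mul_negLogPart_le hβ (sub_ne_zero.2 fun h => ht ⟨i, h⟩)
  calc z * exp (-(2 * β * n * M / z))
      ≤ z * exp (-((∫ t, S t * g t) / z)) := by
        gcongr
    _ ≤ ∫ t, exp (-S t) * g t :=
        integral_mul_exp_neg_integral_div_le hg0 hg (by fun_prop)
          (fun t => mul_nonneg hβ (sum_nonneg fun i _ => negLogPart_nonneg _)) hSg
    _ ≤ ∫ t, (∏ i, |y i - t| ^ β) * g t :=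
        integral_mono_of_nonneg (ae_of_all _ fun t => mul_nonneg (exp_pos _).le (hg0 t)) hint hlower

end Weight

lemma abs_sub_rpow_le {β : ℝ} (hβ : 0 ≤ β) (a b : ℝ) :
    |a - b| ^ β ≤ (1 + a ^ 2) ^ (β / 2) * (1 + b ^ 2) ^ (β / 2) := by
  have hsq : |a - b| ^ 2 ≤ (1 + a ^ 2) * (1 + b ^ 2) := by
    rw [sq_abs]; nlinarith [sq_nonneg (1 + a * b)]
  calc |a - b| ^ β = (|a - b| ^ 2) ^ (β / 2) := by
        rw [← rpow_natCast, ← rpow_mul (abs_nonneg _)]; ring_nf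
    _ ≤ ((1 + a ^ 2) * (1 + b ^ 2)) ^ (β / 2) := by gcongr
    _ = (1 + a ^ 2) ^ (β / 2) * (1 + b ^ 2) ^ (β / 2) := mul_rpow (by positivity) (by positivity)

lemma eventually_mul_log_le_of_tendsto {V : ℝ → ℝ}
    (hVtop : Tendsto (fun x => V x / log (1 + x ^ 2)) atTop atTop)
    (hVbot : Tendsto (fun x => V x / log (1 + x ^ 2)) atBot atTop) (c : ℝ) :
    ∀ᶠ x in cocompact ℝ, c * log (1 + x ^ 2) ≤ V x := by
  have hlog : ∀ x : ℝ, x ≠ 0 → 0 < log (1 + x ^ 2) := fun x hx =>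
    log_pos (lt_add_of_pos_right 1 (by positivity))
  rw [cocompact_eq_atBot_atTop, eventually_sup]
  constructor
  · filter_upwards [hVbot.eventually_ge_atTop c, eventually_ne_atBot 0] with x hx hx0
    rwa [le_div_iff₀ (hlog x hx0)] at hx
  · filter_upwards [hVtop.eventually_ge_atTop c, eventually_ne_atTop 0] with x hx hx0
    rwa [le_div_iff₀ (hlog x hx0)] at hx

lemma integrable_one_add_sq_rpow_mul_exp_neg {V : ℝ → ℝ} (hV : Measurable V) {m : ℝ}
    (hm : ∀ x, m ≤ V x) {s : ℝ} (htail : ∀ᶠ x in cocompact ℝ, (s + 1) * log (1 + x ^ 2) ≤ V x) :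
    Integrable (fun x => (1 + x ^ 2) ^ s * exp (-V x)) := by
  have hpos : ∀ x : ℝ, 0 < 1 + x ^ 2 := fun x => by positivity
  refine LocallyIntegrable.integrable_of_isBigO_cocompact ?_ ?_
    (integrable_inv_one_add_sq.integrableAtFilter _)
  · refine (Continuous.locallyIntegrable (f := fun x : ℝ => (1 + x ^ 2) ^ s * exp (-m))
      (((continuous_const.add (continuous_pow 2)).rpow_const
        fun x => Or.inl (hpos x).ne').mul continuous_const)).mono (by fun_prop)
      (ae_of_all _ fun x => ?_)
    rw [norm_of_nonneg (by positivity), norm_of_nonneg (by positivity)]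
    gcongr
    exact hm x
  · refine Asymptotics.IsBigO.of_bound 1 ?_
    filter_upwards [htail] with x hx
    rw [one_mul, norm_of_nonneg (by positivity), norm_of_nonneg (by positivity)]
    calc (1 + x ^ 2) ^ s * exp (-V x) ≤ (1 + x ^ 2) ^ s * (1 + x ^ 2) ^ (-(s + 1)) := by
          rw [rpow_def_of_pos (hpos x) (-(s + 1))]
          gcongr
          linarith
      _ = (1 + x ^ 2)⁻¹ := by
          rw [← rpow_add (hpos x), show s + -(s + 1) = -1 by ring, rpow_neg_one]

section BetaWeight

variable {V : ℝ → ℝ} {β : ℝ} {N : ℕ}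

lemma betaWeight_nonneg (lam : Fin N → ℝ) : 0 ≤ betaWeight V β N lam := by
  unfold betaWeight; positivity

lemma measurable_betaWeight (hV : Measurable V) : Measurable (betaWeight V β N) := by
  unfold betaWeight; fun_prop

lemma prod_prod_Ioi_abs_sub_rpow_le (hβ : 0 ≤ β) (lam : Fin N → ℝ) :
    ∏ i, ∏ j ∈ Ioi i, |lam j - lam i| ^ β ≤ ∏ k, ((1 + lam k ^ 2) ^ (β / 2)) ^ (N - 1) := by
  set q := fun k => (1 + lam k ^ 2) ^ (β / 2)
  calc ∏ i, ∏ j ∈ Ioi i, |lam j - lam i| ^ β ≤ ∏ i, ∏ j ∈ Ioi i, q i * q j := by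
        gcongr with i _ j _
        rw [mul_comm]
        exact abs_sub_rpow_le hβ _ _
    _ = ∏ i, ∏ j ∈ {i}ᶜ, q i := prod_prod_Ioi_mul_eq_prod_prod_off_diag fun _ b => q b
    _ = ∏ k, q k ^ (N - 1) := by simp [prod_const, card_compl]

lemma betaWeight_le_prod (hβ : 0 ≤ β) {κ : ℝ} (hβN : β * N ≤ κ) (lam : Fin N → ℝ) :
    betaWeight V β N lam ≤ ∏ k, (1 + lam k ^ 2) ^ (κ / 2) * exp (-V (lam k)) := by
  have hpow : ∀ k, ((1 + lam k ^ 2) ^ (β / 2)) ^ (N - 1) ≤ (1 + lam k ^ 2) ^ (κ / 2) := by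
    intro k
    rw [← rpow_natCast, ← rpow_mul (by positivity)]
    apply rpow_le_rpow_of_exponent_le (le_add_of_nonneg_right (sq_nonneg _))
    have hN : ((N - 1 : ℕ) : ℝ) ≤ N := Nat.cast_le.2 (Nat.sub_le N 1)
    nlinarith
  calc betaWeight V β N lam
        = (∏ i, ∏ j ∈ Ioi i, |lam j - lam i| ^ β) * ∏ k, exp (-V (lam k)) := by
          rw [betaWeight, ← exp_sum, sum_neg_distrib]
    _ ≤ (∏ k, ((1 + lam k ^ 2) ^ (β / 2)) ^ (N - 1)) * ∏ k, exp (-V (lam k)) :=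
          mul_le_mul_of_nonneg_right (prod_prod_Ioi_abs_sub_rpow_le hβ lam) (by positivity)
    _ ≤ ∏ k, (1 + lam k ^ 2) ^ (κ / 2) * exp (-V (lam k)) := by
          rw [← prod_mul_distrib]
          gcongr with k
          exact hpow k

lemma integrable_betaWeight (hV : Measurable V) {κ : ℝ}
    (hw : Integrable (fun x => (1 + x ^ 2) ^ (κ / 2) * exp (-V x))) (hβ : 0 ≤ β)
    (hβN : β * N ≤ κ) : Integrable (betaWeight V β N) := by
  refine (Integrable.fintype_prod (fun _ : Fin N => hw)).mono'
    (measurable_betaWeight hV).aestronglyMeasurable (ae_of_all _ fun lam => ?_)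
  rw [norm_of_nonneg (betaWeight_nonneg lam)]
  exact betaWeight_le_prod hβ hβN lam

lemma betaWeight_cons (t : ℝ) (lam : Fin N → ℝ) :
    betaWeight V β (N + 1) (Fin.cons t lam)
      = betaWeight V β N lam * ((∏ i, |lam i - t| ^ β) * exp (-V t)) := by
  simp only [betaWeight, Fin.prod_univ_succ, Fin.sum_univ_succ, Fin.prod_Ioi_zero,
    Fin.prod_Ioi_succ, Fin.cons_zero, Fin.cons_succ, neg_add, exp_add]
  ring

lemma Zpart_zero : Zpart V β 0 = 1 := by
  simp [Zpart, betaWeight, measureReal_def, volume_pi]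

lemma piFinSuccAbove_zero_symm_apply {α : Type*} [MeasurableSpace α] {n : ℕ}
    (p : α × (Fin n → α)) :
    (MeasurableEquiv.piFinSuccAbove (fun _ : Fin (n + 1) => α) 0).symm p = Fin.cons p.1 p.2 := by
  simp [MeasurableEquiv.piFinSuccAbove_symm_apply, Fin.insertNthEquiv, Fin.insertNth_zero']

lemma integrable_betaWeight_mul_prod_abs_sub_rpow (hV : Measurable V) {κ : ℝ}
    (hw : Integrable (fun x => (1 + x ^ 2) ^ (κ / 2) * exp (-V x))) (hβ : 0 ≤ β)
    (hβN : β * (N + 1) ≤ κ) :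
    Integrable (fun p : ℝ × (Fin N → ℝ) =>
      betaWeight V β N p.2 * ((∏ i, |p.2 i - p.1| ^ β) * exp (-V p.1))) := by
  have := ((volume_preserving_piFinSuccAbove (fun _ : Fin (N + 1) => ℝ) 0).symm.integrable_comp_emb
    (MeasurableEquiv.measurableEmbedding _)).2
    (integrable_betaWeight hV hw hβ (by push_cast; exact hβN))
  refine this.congr (ae_of_all _ fun p => ?_)
  rw [Function.comp_apply, piFinSuccAbove_zero_symm_apply, betaWeight_cons]

lemma Zpart_succ_eq_integral_integral (hF : Integrable (fun p : ℝ × (Fin N → ℝ) =>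
      betaWeight V β N p.2 * ((∏ i, |p.2 i - p.1| ^ β) * exp (-V p.1)))) :
    Zpart V β (N + 1)
      = ∫ lam, ∫ t, betaWeight V β N lam * ((∏ i, |lam i - t| ^ β) * exp (-V t)) := by
  rw [Zpart, ← (volume_preserving_piFinSuccAbove (fun _ : Fin (N + 1) => ℝ) 0).symm.integral_comp'
    (betaWeight V β (N + 1))]
  simp_rw [piFinSuccAbove_zero_symm_apply, betaWeight_cons]
  exact integral_prod_symm _ hF

theorem mul_Zpart_le_Zpart_succ (hV : Measurable V) {m κ : ℝ} (hm : ∀ x, m ≤ V x)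
    (hg : Integrable fun x => exp (-V x))
    (hw : Integrable (fun x => (1 + x ^ 2) ^ (κ / 2) * exp (-V x))) (hβ : 0 ≤ β)
    (hβN : β * (N + 1) ≤ κ) :
    (∫ x, exp (-V x)) * exp (-(2 * κ * exp (-m) / ∫ x, exp (-V x))) * Zpart V β N
      ≤ Zpart V β (N + 1) := by
  set z := ∫ x, exp (-V x)
  have hF := integrable_betaWeight_mul_prod_abs_sub_rpow hV hw hβ hβN
  rw [Zpart_succ_eq_integral_integral hF, Zpart, ← integral_const_mul]
  refine integral_mono_ae
    ((integrable_betaWeight hV hw hβ (by linarith)).const_mul _) hF.integral_prod_right ?_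
  filter_upwards [hF.prod_left_ae] with lam hlam
  rw [integral_const_mul, mul_comm _ (betaWeight V β N lam)]
  rcases (betaWeight_nonneg lam).eq_or_lt with h0 | hpos
  · rw [← h0, zero_mul, zero_mul]
  refine mul_le_mul_of_nonneg_left ?_ hpos.le
  calc z * exp (-(2 * κ * exp (-m) / z)) ≤ z * exp (-(2 * β * N * exp (-m) / z)) := by
        gcongr z * exp (-(?_ / z))
        nlinarith [exp_pos (-m)]
    _ ≤ _ := mul_exp_le_integral_prod_abs_sub_rpow_mul (fun x => (exp_pos _).le)
        (fun t => exp_le_exp.2 (neg_le_neg (hm t))) hg hβ lam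
        ((integrable_const_mul_iff hpos.ne'.isUnit _).1 hlam)

theorem pow_le_Zpart (hV : Measurable V) {m κ : ℝ} (hm : ∀ x, m ≤ V x)
    (hg : Integrable fun x => exp (-V x))
    (hw : Integrable (fun x => (1 + x ^ 2) ^ (κ / 2) * exp (-V x))) (hβ : 0 ≤ β)
    (hβN : β * N ≤ κ) :
    ((∫ x, exp (-V x)) * exp (-(2 * κ * exp (-m) / ∫ x, exp (-V x)))) ^ N ≤ Zpart V β N := by
  induction N with
  | zero => rw [pow_zero, Zpart_zero]
  | succ N ih =>
    push_cast at hβN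
    have hc : 0 ≤ (∫ x, exp (-V x)) * exp (-(2 * κ * exp (-m) / ∫ x, exp (-V x))) :=
      mul_nonneg (integral_nonneg fun x => (exp_pos _).le) (exp_pos _).le
    rw [pow_succ']
    exact (mul_le_mul_of_nonneg_left (ih (by nlinarith)) hc).trans
      (mul_Zpart_le_Zpart_succ hV hm hg hw hβ hβN)

end BetaWeight

end BetaEnsemble

open BetaEnsemble

theorem stmt1_general
    (V : ℝ → ℝ) (hVmeas : Measurable V) (hVbdd : BddBelow (Set.range V))
    (hVtop : Tendsto (fun x => V x / Real.log (1 + x ^ 2)) atTop atTop)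
    (hVbot : Tendsto (fun x => V x / Real.log (1 + x ^ 2)) atBot atTop)
    (κ : ℝ) :
    ∃ C : ℝ, ∀ (β : ℝ) (N : ℕ), 0 < β → 1 ≤ N → β * N ≤ κ →
      C ≤ Real.log (Zpart V β N) / N := by
  obtain ⟨m, hm⟩ := hVbdd
  have hm' : ∀ x, m ≤ V x := fun x => hm ⟨x, rfl⟩
  have hw := integrable_one_add_sq_rpow_mul_exp_neg hVmeas hm'
    (eventually_mul_log_le_of_tendsto hVtop hVbot (κ / 2 + 1))
  have hg : Integrable fun x => exp (-V x) := by
    simpa using integrable_one_add_sq_rpow_mul_exp_neg hVmeas hm' (s := 0)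
      (eventually_mul_log_le_of_tendsto hVtop hVbot _)
  set c := (∫ x, exp (-V x)) * exp (-(2 * κ * exp (-m) / ∫ x, exp (-V x)))
  have hc : 0 < c := mul_pos (integral_exp_pos hg) (exp_pos _)
  refine ⟨log c, fun β N hβ hN hβN => ?_⟩
  rw [le_div_iff₀ (Nat.cast_pos.2 hN)]
  calc log c * N = log (c ^ N) := by rw [log_pow, mul_comm]
    _ ≤ log (Zpart V β N) := log_le_log (pow_pos hc N) (pow_le_Zpart hVmeas hm' hg hw hβ.le hβN)

theorem stmt1
    (V : ℝ → ℝ) (hVmeas : Measurable V) (hVbdd : BddBelow (Set.range V))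
    (hVtop : Tendsto (fun x => V x / Real.log (1 + x ^ 2)) atTop atTop)
    (hVbot : Tendsto (fun x => V x / Real.log (1 + x ^ 2)) atBot atTop)
    (κ : ℝ) (hκ : 0 < κ) :
    ∃ C : ℝ, ∀ (β : ℝ) (N : ℕ), 0 < β → 1 ≤ N → β * N ≤ κ →
      C ≤ Real.log (Zpart V β N) / N :=
  stmt1_general V hVmeas hVbdd hVtop hVbot κ
end
end

section
/- Let φ : ℝ → ℝ be measurable with ∫_ℝ |x|^k e^{φ(x)−V(x)} dx < ∞ for every k = 0,1,2,…, and set Z_N^{(φ)} = ∫_{ℝ^N} ∏_{i<j}|λ_j−λ_i|^β ∏_{i=1}^N e^{φ(λ_i)−V(λ_i)} dλ. Then for every κ > 0 there is a constant C_{φ,κ} such that for all β > 0 and N ∈ ℕ with βN ≤ κ, (log Z_N^{(φ)})/N ≤ C_{φ,κ}. -/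
/-!
Bounding each Vandermonde factor by `|λⱼ - λᵢ| ≤ (1 + λᵢ²)(1 + λⱼ²)` and collecting, every
variable occurs in `N - 1` pairs, so the integrand of `Z_N^{(φ)}` is at most
`∏ᵢ (1 + λᵢ²)^{β(N-1)} e^{φ(λᵢ) - V(λᵢ)}`. As `β(N - 1) ≤ κ ≤ m := ⌈κ⌉`, this is dominated by the
product `∏ᵢ g(λᵢ)` with `g(x) = (1 + x²)^m e^{φ(x) - V(x)}`, integrable by the moment hypothesis.
Hence `Z_N^{(φ)} ≤ (∫ g)^N` and `log Z_N^{(φ)} / N ≤ |log ∫ g|`.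
-/

open MeasureTheory Real Filter Finset

noncomputable section

/-- The partition function with modified potential `V - φ`:
`Z_N^{(φ)} = ∫_{ℝ^N} ∏_{i<j}|λ_j−λ_i|^β ∏_i e^{φ(λ_i)−V(λ_i)} dλ`. -/
def Zphi (V φ : ℝ → ℝ) (β : ℝ) (N : ℕ) : ℝ :=
  ∫ lam : Fin N → ℝ,
    (∏ i : Fin N, ∏ j ∈ Finset.Ioi i, |lam j - lam i| ^ β) *
      ∏ i : Fin N, Real.exp (φ (lam i) - V (lam i))

lemma abs_sub_le_one_add_sq_mul_one_add_sq (a b : ℝ) : |b - a| ≤ (1 + a ^ 2) * (1 + b ^ 2) := by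
  rw [abs_le]
  constructor <;> nlinarith [sq_nonneg (a - b), sq_nonneg (a + b), sq_nonneg (a * b),
    sq_nonneg (a * b - 1), sq_nonneg (a * b + 1)]

lemma Fin.prod_prod_Ioi_mul {M : Type*} [CommMonoid M] {N : ℕ} (f : Fin N → M) :
    ∏ i, ∏ j ∈ Ioi i, (f i * f j) = ∏ i, f i ^ (N - 1) := by
  have hleft : ∏ i : Fin N, ∏ j ∈ Ioi i, f i = ∏ i : Fin N, f i ^ (N - 1 - i) :=
    prod_congr rfl fun i _ => by rw [Finset.prod_const, Fin.card_Ioi]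
  have hright : ∏ i : Fin N, ∏ j ∈ Ioi i, f j = ∏ j : Fin N, f j ^ (j : ℕ) := by
    rw [prod_comm' (t' := univ) (s' := fun j => Iio j) (by simp)]
    exact prod_congr rfl fun j _ => by rw [Finset.prod_const, Fin.card_Iio]
  simp_rw [prod_mul_distrib]
  rw [hleft, hright, ← prod_mul_distrib]
  refine prod_congr rfl fun i _ => ?_
  rw [← pow_add]
  congr 1
  omega

lemma one_add_sq_rpow_pow_le_pow (x : ℝ) {β : ℝ} {n m : ℕ} (h : β * n ≤ m) :
    ((1 + x ^ 2) ^ β) ^ n ≤ (1 + x ^ 2) ^ m := by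
  have hx : 1 ≤ 1 + x ^ 2 := le_add_of_nonneg_right (sq_nonneg x)
  rw [← rpow_natCast, ← rpow_mul (by positivity), ← rpow_natCast _ m]
  exact rpow_le_rpow_of_exponent_le hx h

lemma prod_prod_Ioi_abs_sub_rpow_le {N m : ℕ} (x : Fin N → ℝ) {β : ℝ} (hβ : 0 ≤ β)
    (h : β * (N - 1 : ℕ) ≤ m) :
    ∏ i, ∏ j ∈ Ioi i, |x j - x i| ^ β ≤ ∏ i, (1 + x i ^ 2) ^ m :=
  calc ∏ i, ∏ j ∈ Ioi i, |x j - x i| ^ β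
      ≤ ∏ i, ∏ j ∈ Ioi i, ((1 + x i ^ 2) ^ β * (1 + x j ^ 2) ^ β) := by
        gcongr with i _ j _
        rw [← mul_rpow (by positivity) (by positivity)]
        exact rpow_le_rpow (abs_nonneg _) (abs_sub_le_one_add_sq_mul_one_add_sq _ _) hβ
    _ = ∏ i, ((1 + x i ^ 2) ^ β) ^ (N - 1) := Fin.prod_prod_Ioi_mul _
    _ ≤ ∏ i, (1 + x i ^ 2) ^ m := by
        gcongr with i _
        exact one_add_sq_rpow_pow_le_pow (x i) h

lemma integrable_one_add_sq_pow_mul {f : ℝ → ℝ}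
    (hf : ∀ k : ℕ, Integrable (fun x => |x| ^ k * f x)) (m : ℕ) :
    Integrable (fun x => (1 + x ^ 2) ^ m * f x) := by
  have hexpand : (fun x => (1 + x ^ 2) ^ m * f x) =
      fun x => ∑ k ∈ range (m + 1), (m.choose k : ℝ) * (|x| ^ (2 * k) * f x) := by
    funext x
    rw [add_comm, add_pow, sum_mul]
    refine sum_congr rfl fun k _ => ?_
    rw [pow_mul, sq_abs]
    ring
  rw [hexpand]
  exact integrable_finsetSum _ fun k _ => (hf (2 * k)).const_mul _

lemma integral_le_integral_pow_of_le_prod {N : ℕ} {F : (Fin N → ℝ) → ℝ} {g : ℝ → ℝ}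
    (hg : Integrable g) (hF : 0 ≤ F) (hFg : ∀ x, F x ≤ ∏ i, g (x i)) :
    ∫ x, F x ≤ (∫ x, g x) ^ N := by
  calc ∫ x, F x ≤ ∫ x : Fin N → ℝ, ∏ i, g (x i) :=
        integral_mono_of_nonneg (.of_forall hF) (.fintype_prod fun _ => hg) (.of_forall hFg)
    _ = (∫ x, g x) ^ N := by
        rw [volume_pi, integral_fintype_prod_eq_pow g, Fintype.card_fin]

lemma Real.log_le_mul_abs_log_of_le_pow {z I : ℝ} {N : ℕ} (hz : 0 ≤ z) (h : z ≤ I ^ N) :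
    log z ≤ N * |log I| := by
  rcases hz.eq_or_lt with rfl | hz
  · rw [log_zero]
    positivity
  calc log z ≤ log (I ^ N) := log_le_log hz h
    _ = N * log I := log_pow I N
    _ ≤ N * |log I| := by gcongr; exact le_abs_self _

theorem stmt2_general
    (V : ℝ → ℝ)
    (φ : ℝ → ℝ)
    (hφint : ∀ k : ℕ, Integrable (fun x => |x| ^ k * Real.exp (φ x - V x)))
    (κ : ℝ) :
    ∃ C : ℝ, ∀ (β : ℝ) (N : ℕ), 0 < β → 1 ≤ N → β * N ≤ κ →
      Real.log (Zphi V φ β N) / N ≤ C := by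
  set m := ⌈κ⌉₊
  set g : ℝ → ℝ := fun x => (1 + x ^ 2) ^ m * exp (φ x - V x)
  refine ⟨|log (∫ x, g x)|, fun β N hβ hN hβN => ?_⟩
  have hexponent : β * (N - 1 : ℕ) ≤ m := by
    have : ((N - 1 : ℕ) : ℝ) ≤ N := by exact_mod_cast N.sub_le 1
    nlinarith [Nat.le_ceil κ]
  have hZ : Zphi V φ β N ≤ (∫ x, g x) ^ N := by
    refine integral_le_integral_pow_of_le_prod (integrable_one_add_sq_pow_mul hφint m)
      (fun x => by positivity) fun x => ?_
    rw [prod_mul_distrib]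
    exact mul_le_mul_of_nonneg_right (prod_prod_Ioi_abs_sub_rpow_le x hβ.le hexponent)
      (by positivity)
  rw [div_le_iff₀ (by positivity), mul_comm]
  exact log_le_mul_abs_log_of_le_pow (integral_nonneg fun x => by positivity) hZ

theorem stmt2
    (V : ℝ → ℝ) (hVmeas : Measurable V) (hVbdd : BddBelow (Set.range V))
    (hVtop : Tendsto (fun x => V x / Real.log (1 + x ^ 2)) atTop atTop)
    (hVbot : Tendsto (fun x => V x / Real.log (1 + x ^ 2)) atBot atTop)
    (φ : ℝ → ℝ) (hφmeas : Measurable φ)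
    (hφint : ∀ k : ℕ, Integrable (fun x => |x| ^ k * Real.exp (φ x - V x)))
    (κ : ℝ) (hκ : 0 < κ) :
    ∃ C : ℝ, ∀ (β : ℝ) (N : ℕ), 0 < β → 1 ≤ N → β * N ≤ κ →
      Real.log (Zphi V φ β N) / N ≤ C :=
  stmt2_general V φ hφint κ
end
end

section
/- For every κ > 0 there is a constant C = C(κ) > 0 such that for all β > 0 and N ≥ 2 with βN ≤ κ, the ratio of partition functions satisfies Z_{β,N−1} / Z_{β,N} ≤ C. -/
/-!
Inserting a particle `x` into a configuration `y` of `n` particles multiplies the weight by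
`∏ i, |x - y i| ^ β * exp (-V x)`, so by Tonelli `Z_{β,n+1} ≥ c Z_{β,n}` as soon as the
integral of this factor over `x` is at least `c`, uniformly in `y`. On `[0, 1]` the function
`∑ i, log⁺ |x - y i|⁻¹` has integral at most `2n`, so by Markov's inequality and `βn ≤ κ`
the product `∏ i, |x - y i| ^ β` is at least `exp (-4κ)` outside a set of measure `1/2`;
and `V ≤ M` outside a set of measure `1/4` once `M` is large. Hence the factor integrates
to at least `exp (-(4κ + M)) / 4`.
-/

open MeasureTheory Real Filter Finset

noncomputable section

open scoped ENNReal Topology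

theorem lintegral_fin_cons {α : Type*} [MeasureSpace α] [SigmaFinite (volume : Measure α)]
    {n : ℕ} {f : (Fin (n + 1) → α) → ℝ≥0∞} (hf : Measurable f) :
    ∫⁻ v, f v = ∫⁻ y : Fin n → α, ∫⁻ x : α, f (Fin.cons x y) := by
  have hmp := (volume_preserving_piFinSuccAbove (fun _ : Fin (n + 1) => α) 0).symm
  rw [← hmp.lintegral_comp hf, Measure.volume_eq_prod]
  refine (lintegral_prod_symm' _ (hf.comp hmp.measurable)).trans ?_
  simp only [Function.comp_def, MeasurableEquiv.piFinSuccAbove_symm_apply,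
    Fin.insertNthEquiv_zero]
  rfl

/-- No finiteness is needed: if `b = ∞`, the left-hand side is `a.toReal / 0 = 0`. -/
theorem ENNReal.toReal_div_toReal_le_of_ofReal_mul_le {a b : ℝ≥0∞} {c : ℝ} (hc : 0 < c)
    (h : ENNReal.ofReal c * a ≤ b) : a.toReal / b.toReal ≤ c⁻¹ := by
  rcases eq_or_ne b.toReal 0 with hb | hb
  · simp [hb, hc.le]
  have hb' : b ≠ ∞ := fun h => hb (by simp [h])
  rw [div_le_iff₀ (lt_of_le_of_ne ENNReal.toReal_nonneg (Ne.symm hb)), inv_mul_eq_div,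
    le_div_iff₀' hc]
  simpa [ENNReal.toReal_mul, hc.le] using ENNReal.toReal_mono hb' h

theorem MeasureTheory.exists_measure_setOf_lt_le {α : Type*} [MeasurableSpace α] (μ : Measure α)
    [IsFiniteMeasure μ] {f : α → ℝ} (hf : Measurable f) {ε : ℝ≥0∞} (hε : 0 < ε) :
    ∃ M, μ {x | M < f x} ≤ ε := by
  have hempty : (⋂ M : ℝ, {x | M < f x}) = ∅ :=
    Set.eq_empty_of_forall_notMem fun x hx => lt_irrefl (f x) (Set.mem_iInter.1 hx (f x))
  have hlim : Tendsto (fun M : ℝ => μ {x | M < f x}) atTop (𝓝 0) := by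
    simpa only [hempty, measure_empty, Function.comp_def] using
      tendsto_measure_iInter_atTop (μ := μ) (s := fun M : ℝ => {x | M < f x})
      (fun M => (measurableSet_lt measurable_const hf).nullMeasurableSet)
      (fun M M' h x hx => lt_of_le_of_lt h hx) ⟨0, measure_ne_top μ _⟩
  exact (hlim.eventually (ge_mem_nhds hε)).exists

theorem Real.exp_neg_mul_posLog_inv_le_rpow {r β : ℝ} (hr : 0 < r) (hβ : 0 ≤ β) :
    exp (-(β * log⁺ r⁻¹)) ≤ r ^ β := by
  have hlog : -log⁺ r⁻¹ ≤ log r := by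
    rw [← posLog_sub_posLog_inv]
    linarith [posLog_nonneg (x := r)]
  rw [rpow_def_of_pos hr, exp_le_exp, neg_mul_eq_mul_neg, mul_comm (log r)]
  exact mul_le_mul_of_nonneg_left hlog hβ

theorem Real.volume_setOf_lt_posLog_inv_abs_sub_le (a : ℝ) {t : ℝ} (ht : 0 < t) :
    volume {x | t < log⁺ |x - a|⁻¹} ≤ ENNReal.ofReal (2 * exp (-t)) := by
  rw [← Real.volume_ball a]
  refine measure_mono fun x hx => ?_
  have hlog : t < -log |x - a| := by
    simpa only [log_inv] using (lt_max_iff.1 hx).resolve_left ht.not_gt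
  have hne : x - a ≠ 0 := by
    intro h
    simp only [h, abs_zero, log_zero, neg_zero] at hlog
    exact ht.not_gt hlog
  rw [Metric.mem_ball, dist_eq, ← exp_log (abs_pos.2 hne)]
  exact exp_lt_exp.2 (by linarith)

theorem Real.lintegral_posLog_inv_abs_sub_le (a : ℝ) :
    ∫⁻ x, ENNReal.ofReal (log⁺ |x - a|⁻¹) ≤ 2 := by
  have hmeas : Measurable fun x : ℝ => log⁺ |x - a|⁻¹ := by fun_prop
  rw [lintegral_eq_lintegral_meas_lt _ (ae_of_all _ fun _ => posLog_nonneg) hmeas.aemeasurable]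
  calc ∫⁻ t in Set.Ioi 0, volume {x | t < log⁺ |x - a|⁻¹}
      ≤ ∫⁻ t in Set.Ioi 0, ENNReal.ofReal (2 * exp (-t)) :=
        setLIntegral_mono' measurableSet_Ioi fun t ht =>
          volume_setOf_lt_posLog_inv_abs_sub_le a ht
    _ = ENNReal.ofReal (∫ t in Set.Ioi 0, 2 * exp (-t)) := by
        rw [ofReal_integral_eq_lintegral_ofReal]
        · simpa using (exp_neg_integrableOn_Ioi 0 one_pos).const_mul 2
        · exact ae_of_all _ fun t => by positivity
    _ = 2 := by
        rw [integral_const_mul, integral_exp_neg_Ioi_zero]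
        simp

theorem lintegral_mul_sum_posLog_inv_le {β : ℝ} (hβ : 0 ≤ β) {n : ℕ} (y : Fin n → ℝ) :
    ∫⁻ x, ENNReal.ofReal (β * ∑ i, log⁺ |x - y i|⁻¹) ≤ ENNReal.ofReal (2 * (β * n)) := by
  simp_rw [ENNReal.ofReal_mul hβ, ENNReal.ofReal_sum_of_nonneg fun i _ => posLog_nonneg]
  rw [lintegral_const_mul _ (by fun_prop), lintegral_finsetSum _ fun i _ => by fun_prop]
  calc ENNReal.ofReal β * ∑ i, ∫⁻ x, ENNReal.ofReal (log⁺ |x - y i|⁻¹)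
      ≤ ENNReal.ofReal β * ∑ _i : Fin n, 2 := by
        gcongr with i
        exact lintegral_posLog_inv_abs_sub_le (y i)
    _ = ENNReal.ofReal (2 * (β * n)) := by
        rw [ENNReal.ofReal_mul zero_le_two, ENNReal.ofReal_mul hβ, sum_const, card_univ,
          Fintype.card_fin, nsmul_eq_mul, ENNReal.ofReal_natCast, ENNReal.ofReal_ofNat]
        ring

theorem restrict_Icc_setOf_le_mul_sum_posLog_inv_le {β : ℝ} (hβ : 0 ≤ β) {n : ℕ}
    (y : Fin n → ℝ) {κ : ℝ} (hκ : 0 < κ) (hβn : β * n ≤ κ) :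
    volume.restrict (Set.Icc (0 : ℝ) 1) {x | 4 * κ ≤ β * ∑ i, log⁺ |x - y i|⁻¹} ≤
      ENNReal.ofReal (1 / 2) := by
  have hF : ∀ x, 0 ≤ β * ∑ i, log⁺ |x - y i|⁻¹ :=
    fun x => mul_nonneg hβ (sum_nonneg fun i _ => posLog_nonneg)
  refine (ENNReal.mul_le_mul_iff_right (a := ENNReal.ofReal (4 * κ)) (by simpa using hκ)
    ENNReal.ofReal_ne_top).1 ?_
  calc ENNReal.ofReal (4 * κ) *
        volume.restrict (Set.Icc (0 : ℝ) 1) {x | 4 * κ ≤ β * ∑ i, log⁺ |x - y i|⁻¹}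
      ≤ ∫⁻ x in Set.Icc 0 1, ENNReal.ofReal (β * ∑ i, log⁺ |x - y i|⁻¹) := by
        simpa only [ENNReal.ofReal_le_ofReal_iff (hF _)] using mul_meas_ge_le_lintegral
          (f := fun x => ENNReal.ofReal (β * ∑ i, log⁺ |x - y i|⁻¹)) (by fun_prop)
          (ENNReal.ofReal (4 * κ))
    _ ≤ ∫⁻ x, ENNReal.ofReal (β * ∑ i, log⁺ |x - y i|⁻¹) := setLIntegral_le_lintegral _ _
    _ ≤ ENNReal.ofReal (2 * (β * n)) := lintegral_mul_sum_posLog_inv_le hβ y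
    _ ≤ ENNReal.ofReal (4 * κ) * ENNReal.ofReal (1 / 2) := by
        rw [← ENNReal.ofReal_mul (by positivity)]
        exact ENNReal.ofReal_le_ofReal (by linarith)

def insertionWeight (V : ℝ → ℝ) (β : ℝ) {n : ℕ} (y : Fin n → ℝ) (x : ℝ) : ℝ :=
  (∏ i, |x - y i| ^ β) * exp (-V x)

section BetaEnsemble

variable {V : ℝ → ℝ} {β : ℝ}

theorem betaWeight_nonneg (N : ℕ) (lam : Fin N → ℝ) : 0 ≤ betaWeight V β N lam := by
  unfold betaWeight
  positivity

theorem insertionWeight_nonneg {n : ℕ} (y : Fin n → ℝ) (x : ℝ) :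
    0 ≤ insertionWeight V β y x := by
  unfold insertionWeight
  positivity

theorem measurable_betaWeight (hV : Measurable V) (N : ℕ) : Measurable (betaWeight V β N) := by
  unfold betaWeight
  fun_prop

theorem betaWeight_cons {n : ℕ} (x : ℝ) (y : Fin n → ℝ) :
    betaWeight V β (n + 1) (Fin.cons x y) = insertionWeight V β y x * betaWeight V β n y := by
  simp only [betaWeight, insertionWeight, Fin.prod_univ_succ, Fin.prod_Ioi_zero,
    Fin.prod_Ioi_succ, Fin.sum_univ_succ, Fin.cons_zero, Fin.cons_succ, neg_add, exp_add,
    abs_sub_comm (y _) x]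
  ring

theorem lintegral_betaWeight_succ (hV : Measurable V) (n : ℕ) :
    ∫⁻ lam, ENNReal.ofReal (betaWeight V β (n + 1) lam) =
      ∫⁻ y, (∫⁻ x, ENNReal.ofReal (insertionWeight V β y x)) *
        ENNReal.ofReal (betaWeight V β n y) := by
  rw [lintegral_fin_cons (measurable_betaWeight hV _).ennreal_ofReal]
  refine lintegral_congr fun y => ?_
  simp_rw [betaWeight_cons, ENNReal.ofReal_mul (insertionWeight_nonneg y _)]
  exact lintegral_mul_const' _ _ ENNReal.ofReal_ne_top

theorem Zpart_eq_toReal_lintegral (hV : Measurable V) (N : ℕ) :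
    Zpart V β N = (∫⁻ lam, ENNReal.ofReal (betaWeight V β N lam)).toReal :=
  integral_eq_lintegral_of_nonneg_ae (ae_of_all _ (betaWeight_nonneg N))
    (measurable_betaWeight hV N).aestronglyMeasurable

theorem exp_neg_le_insertionWeight (hβ : 0 ≤ β) {n : ℕ} {y : Fin n → ℝ} {x : ℝ}
    (hx : ∀ i, x ≠ y i) :
    exp (-(β * ∑ i, log⁺ |x - y i|⁻¹ + V x)) ≤ insertionWeight V β y x := by
  rw [insertionWeight, neg_add, exp_add, mul_sum, ← sum_neg_distrib, exp_sum]
  gcongr with i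
  exact exp_neg_mul_posLog_inv_le_rpow (abs_pos.2 (sub_ne_zero.2 (hx i))) hβ

theorem exists_ofReal_le_lintegral_insertionWeight (hV : Measurable V) {κ : ℝ}
    (hκ : 0 < κ) :
    ∃ c > 0, ∀ (β : ℝ) (n : ℕ) (y : Fin n → ℝ), 0 ≤ β → β * n ≤ κ →
      ENNReal.ofReal c ≤ ∫⁻ x, ENNReal.ofReal (insertionWeight V β y x) := by
  set μ := volume.restrict (Set.Icc (0 : ℝ) 1)
  have : IsProbabilityMeasure μ := ⟨by simp [μ]⟩
  obtain ⟨M, hM⟩ :=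
    exists_measure_setOf_lt_le μ hV (ε := ENNReal.ofReal (1 / 4)) (by norm_num)
  refine ⟨exp (-(4 * κ + M)) / 4, by positivity, fun β n y hβ hβn => ?_⟩
  set B := {x | 4 * κ ≤ β * ∑ i, log⁺ |x - y i|⁻¹} ∪ {x | M < V x}
  have hBm : MeasurableSet B :=
    (measurableSet_le measurable_const (by fun_prop)).union (measurableSet_lt measurable_const hV)
  have hB : ENNReal.ofReal (1 / 4) ≤ μ Bᶜ := by
    have hμB : μ B ≤ ENNReal.ofReal (3 / 4) :=
      calc μ B ≤ ENNReal.ofReal (1 / 2) + ENNReal.ofReal (1 / 4) :=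
            (measure_union_le _ _).trans
              (add_le_add (restrict_Icc_setOf_le_mul_sum_posLog_inv_le hβ y hκ hβn) hM)
        _ = ENNReal.ofReal (3 / 4) := by rw [← ENNReal.ofReal_add] <;> norm_num
    rw [prob_compl_eq_one_sub hBm]
    calc ENNReal.ofReal (1 / 4) = 1 - ENNReal.ofReal (3 / 4) := by
          rw [← ENNReal.ofReal_one, ← ENNReal.ofReal_sub] <;> norm_num
      _ ≤ 1 - μ B := tsub_le_tsub_left hμB 1
  have hgood : ∀ᵐ x ∂μ, x ∈ Bᶜ →
      ENNReal.ofReal (exp (-(4 * κ + M))) ≤ ENNReal.ofReal (insertionWeight V β y x) := by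
    filter_upwards [ae_restrict_of_ae ((Set.countable_range y).ae_notMem volume)] with x hx hxB
    simp only [B, Set.mem_compl_iff, Set.mem_union, Set.mem_ofPred_eq, not_or, not_le] at hxB
    refine ENNReal.ofReal_le_ofReal ((exp_le_exp.2 ?_).trans
      (exp_neg_le_insertionWeight hβ fun i h => hx ⟨i, h.symm⟩))
    linarith [hxB.1, hxB.2]
  calc ENNReal.ofReal (exp (-(4 * κ + M)) / 4)
      = ENNReal.ofReal (exp (-(4 * κ + M))) * ENNReal.ofReal (1 / 4) := by
        rw [← ENNReal.ofReal_mul (by positivity), mul_one_div]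
    _ ≤ ENNReal.ofReal (exp (-(4 * κ + M))) * μ Bᶜ := by gcongr
    _ = ∫⁻ _ in Bᶜ, ENNReal.ofReal (exp (-(4 * κ + M))) ∂μ := (setLIntegral_const _ _).symm
    _ ≤ ∫⁻ x in Bᶜ, ENNReal.ofReal (insertionWeight V β y x) ∂μ :=
        setLIntegral_mono_ae' hBm.compl hgood
    _ ≤ ∫⁻ x, ENNReal.ofReal (insertionWeight V β y x) ∂μ := setLIntegral_le_lintegral _ _
    _ ≤ ∫⁻ x, ENNReal.ofReal (insertionWeight V β y x) :=
        lintegral_mono' Measure.restrict_le_self le_rfl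

end BetaEnsemble

theorem stmt7_general
    (V : ℝ → ℝ) (hVmeas : Measurable V)
    (κ : ℝ) (hκ : 0 < κ) :
    ∃ C : ℝ, 0 < C ∧ ∀ (β : ℝ) (N : ℕ), 0 < β → 2 ≤ N → β * N ≤ κ →
      Zpart V β (N - 1) / Zpart V β N ≤ C := by
  obtain ⟨c, hc, hinsert⟩ := exists_ofReal_le_lintegral_insertionWeight hVmeas hκ
  refine ⟨c⁻¹, inv_pos.2 hc, fun β N hβ hN hβN => ?_⟩
  obtain ⟨n, rfl⟩ : ∃ n, N = n + 1 := ⟨N - 1, by omega⟩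
  rw [Nat.add_sub_cancel, Zpart_eq_toReal_lintegral hVmeas, Zpart_eq_toReal_lintegral hVmeas]
  refine ENNReal.toReal_div_toReal_le_of_ofReal_mul_le hc ?_
  rw [lintegral_betaWeight_succ hVmeas, ← lintegral_const_mul' _ _ ENNReal.ofReal_ne_top]
  refine lintegral_mono fun y => mul_le_mul_left (hinsert β n y hβ.le ?_) _
  calc β * n ≤ β * (n + 1 : ℕ) := by gcongr; omega
    _ ≤ κ := hβN

theorem stmt7
    (V : ℝ → ℝ) (hVmeas : Measurable V) (hVbdd : BddBelow (Set.range V))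
    (hVtop : Tendsto (fun x => V x / Real.log (1 + x ^ 2)) atTop atTop)
    (hVbot : Tendsto (fun x => V x / Real.log (1 + x ^ 2)) atBot atTop)
    (κ : ℝ) (hκ : 0 < κ) :
    ∃ C : ℝ, 0 < C ∧ ∀ (β : ℝ) (N : ℕ), 0 < β → 2 ≤ N → β * N ≤ κ →
      Zpart V β (N - 1) / Zpart V β N ≤ C :=
  stmt7_general V hVmeas κ hκ
end
end

section
/- For x ∈ ℝ, let X_N(x) = ∏_{i=1}^N |x − λ_i|^β under the beta ensemble with parameters (β,N). Then for every κ > 0 and every compact set K ⊂ ℝ, sup{ E_{β,N}[(X_N(x))²] : βN ≤ κ, x ∈ K } < ∞. -/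
open MeasureTheory Real Filter Finset

noncomputable section

/-- The beta ensemble: the probability measure on `ℝ^N` with density proportional to
`∏_{i<j} |λ_j - λ_i|^β · exp(-∑ V(λ_i))`. -/
def betaMeasure (V : ℝ → ℝ) (β : ℝ) (N : ℕ) : Measure (Fin N → ℝ) :=
  (ENNReal.ofReal (Zpart V β N))⁻¹ •
    volume.withDensity (fun lam => ENNReal.ofReal (betaWeight V β N lam))

/-!
With `⟨t⟩ = √(1 + t²)` one has `|x - λ| ≤ ⟨x⟩⟨λ⟩`, so `X_N(x)² ≤ ⟨x⟩^{2βN} ∏ᵢ ⟨λᵢ⟩^{2β}` and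
`⟨x⟩^{2βN} ≤ ⟨R⟩^{2κ}` on `K ⊆ [-R, R]`. By Hölder, `E ∏ᵢ ⟨λᵢ⟩^{2β} ≤ maxₖ E ⟨λₖ⟩^{2κ}`, and
integrating out `λₖ` with the other particles `y` fixed reduces everything to the
one-dimensional comparison
  `∫ ⟨t⟩^{2κ} ∏ⱼ |yⱼ - t|^β e^{-V(t)} dt ≤ D ∫ ∏ⱼ |yⱼ - t|^β e^{-V(t)} dt`, uniformly in `y`.
The left side is at most `∏ⱼ ⟨yⱼ⟩^β ∫ ⟨t⟩^{3κ} e^{-V}`, finite because `V` beats every multiple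
of `log (1 + t²)`. For the right side, `|yⱼ - t| ≥ ⟨yⱼ⟩ min(1, |yⱼ - t|) / 3` for `t ∈ [0, 1]`;
the function `β ∑ⱼ -log min(1, |yⱼ - t|)` has integral `O(κ)` over `[0, 1]`, so by Markov's
inequality it stays bounded on a set of `t` of measure `≥ 1/4` on which `V` is also bounded,
and the right side is `≳ ∏ⱼ ⟨yⱼ⟩^β`.
-/

open scoped ENNReal

namespace BetaEnsemble

def bracket (t : ℝ) : ℝ≥0∞ := ENNReal.ofReal √(1 + t ^ 2)

def gibbs (V : ℝ → ℝ) (t : ℝ) : ℝ≥0∞ := ENNReal.ofReal (Real.exp (-V t))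

def vandermonde (β : ℝ) {m : ℕ} (z : Fin m → ℝ) : ℝ≥0∞ :=
  ∏ i, ∏ j ∈ Ioi i, edist (z j) (z i) ^ β

def density (V : ℝ → ℝ) (β : ℝ) {m : ℕ} (z : Fin m → ℝ) : ℝ≥0∞ :=
  vandermonde β z * ∏ i, gibbs V (z i)

def IsLogConfining (V : ℝ → ℝ) : Prop :=
  ∀ c : ℝ, 0 ≤ c → ∃ M, ∀ x, c * Real.log (1 + x ^ 2) - V x ≤ M

-- Since `Real.log 0 = 0`, this vanishes (rather than being infinite) at `u = 0`.
def negLogTrunc (u : ℝ) : ℝ := -Real.log (min 1 |u|)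

lemma one_le_bracket (t : ℝ) : 1 ≤ bracket t :=
  ENNReal.one_le_ofReal.2 (Real.one_le_sqrt.2 (by nlinarith [sq_nonneg t]))

lemma one_le_bracket_rpow (t : ℝ) {c : ℝ} (hc : 0 ≤ c) : 1 ≤ bracket t ^ c := by
  simpa using ENNReal.rpow_le_rpow_of_exponent_le (one_le_bracket t) hc

lemma bracket_ne_top (t : ℝ) : bracket t ≠ ∞ := ENNReal.ofReal_ne_top

lemma bracket_le_bracket {x R : ℝ} (h : |x| ≤ R) : bracket x ≤ bracket R :=
  ENNReal.ofReal_le_ofReal (Real.sqrt_le_sqrt (by nlinarith [sq_abs x, abs_nonneg x]))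

@[fun_prop]
lemma measurable_bracket : Measurable bracket := by
  unfold bracket; fun_prop

lemma gibbs_ne_zero (V : ℝ → ℝ) (t : ℝ) : gibbs V t ≠ 0 :=
  (ENNReal.ofReal_pos.2 (Real.exp_pos _)).ne'

@[fun_prop]
lemma measurable_gibbs {V : ℝ → ℝ} (hV : Measurable V) : Measurable (gibbs V) := by
  unfold gibbs; fun_prop

lemma edist_eq_ofReal_abs_sub (a b : ℝ) : edist a b = ENNReal.ofReal |a - b| := by
  rw [edist_dist, Real.dist_eq]

@[fun_prop]
lemma measurable_density {V : ℝ → ℝ} (hV : Measurable V) (β : ℝ) (m : ℕ) :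
    Measurable (density V β (m := m)) := by
  unfold density vandermonde; fun_prop

lemma density_ne_top (V : ℝ → ℝ) {β : ℝ} (hβ : 0 ≤ β) {m : ℕ} (z : Fin m → ℝ) :
    density V β z ≠ ∞ := by
  unfold density vandermonde gibbs
  refine ENNReal.mul_ne_top ?_ ?_ <;> refine ENNReal.prod_ne_top fun i _ => ?_
  · exact ENNReal.prod_ne_top fun j _ => ENNReal.rpow_ne_top_of_nonneg hβ (edist_ne_top _ _)
  · exact ENNReal.ofReal_ne_top

lemma ofReal_betaWeight (V : ℝ → ℝ) {β : ℝ} (hβ : 0 ≤ β) (N : ℕ) (z : Fin N → ℝ) :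
    ENNReal.ofReal (betaWeight V β N z) = density V β z := by
  have hexp : Real.exp (-∑ i, V (z i)) = ∏ i, Real.exp (-V (z i)) := by
    rw [← Real.exp_sum, sum_neg_distrib]
  simp only [betaWeight, density, vandermonde, gibbs, hexp, edist_eq_ofReal_abs_sub]
  rw [ENNReal.ofReal_mul (by positivity), ENNReal.ofReal_prod_of_nonneg fun _ _ => by positivity,
    ENNReal.ofReal_prod_of_nonneg fun _ _ => by positivity]
  congr 1
  refine prod_congr rfl fun i _ => ?_
  rw [ENNReal.ofReal_prod_of_nonneg fun _ _ => by positivity]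
  exact prod_congr rfl fun j _ => (ENNReal.ofReal_rpow_of_nonneg (abs_nonneg _) hβ).symm

lemma prod_Ioi_mul_swap_eq_prod_ite {ι M : Type*} [Fintype ι] [LinearOrder ι]
    [LocallyFiniteOrderTop ι] [LocallyFiniteOrderBot ι] [CommMonoid M] (f : ι → ι → M) :
    ∏ i, ∏ j ∈ Ioi i, f i j * f j i = ∏ i, ∏ j, if i = j then 1 else f i j := by
  have hsplit : ∀ i, ∏ j, (if i = j then 1 else f i j)
      = (∏ j ∈ Ioi i, f i j) * ∏ j ∈ Iio i, f i j := fun i => by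
    rw [prod_ite, prod_const_one, one_mul, ← prod_disjUnion (disjoint_Ioi_Iio i),
      Ioi_disjUnion_Iio, compl_singleton, filter_ne]
  have hswap : ∏ i, ∏ j ∈ Iio i, f i j = ∏ i, ∏ j ∈ Ioi i, f j i := prod_comm' (by simp)
  simp_rw [hsplit, prod_mul_distrib, hswap]

lemma edist_rpow_half_mul_edist_rpow_half {β : ℝ} (hβ : 0 ≤ β) (a b : ℝ) :
    edist a b ^ (β / 2) * edist b a ^ (β / 2) = edist a b ^ β := by
  rw [edist_comm b, ← ENNReal.rpow_add_of_nonneg _ _ (by linarith) (by linarith), add_halves]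

lemma vandermonde_eq_prod_ite {β : ℝ} (hβ : 0 ≤ β) {m : ℕ} (z : Fin m → ℝ) :
    vandermonde β z = ∏ i, ∏ j, if i = j then 1 else edist (z i) (z j) ^ (β / 2) := by
  rw [vandermonde, ← prod_Ioi_mul_swap_eq_prod_ite]
  refine prod_congr rfl fun i _ => prod_congr rfl fun j _ => ?_
  rw [edist_rpow_half_mul_edist_rpow_half hβ, edist_comm]

lemma vandermonde_insertNth {β : ℝ} (hβ : 0 ≤ β) {n : ℕ} (k : Fin (n + 1)) (t : ℝ)
    (y : Fin n → ℝ) :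
    vandermonde β (k.insertNth t y) = (∏ j, edist (y j) t ^ β) * vandermonde β y := by
  simp_rw [vandermonde_eq_prod_ite hβ, Fin.prod_univ_succAbove _ k]
  simp only [↓reduceIte, Fin.succAbove_ne, (Fin.succAbove_ne _ _).symm, Fin.succAbove_inj,
    Fin.insertNth_apply_same, Fin.insertNth_apply_succAbove, one_mul]
  rw [prod_mul_distrib, ← mul_assoc, ← prod_mul_distrib]
  simp_rw [edist_rpow_half_mul_edist_rpow_half hβ, edist_comm t]

lemma density_insertNth (V : ℝ → ℝ) {β : ℝ} (hβ : 0 ≤ β) {n : ℕ} (k : Fin (n + 1)) (t : ℝ)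
    (y : Fin n → ℝ) :
    density V β (k.insertNth t y) = ((∏ j, edist (y j) t ^ β) * gibbs V t) * density V β y := by
  rw [density, density, vandermonde_insertNth hβ, Fin.prod_univ_succAbove _ k]
  simp only [Fin.insertNth_apply_same, Fin.insertNth_apply_succAbove]
  ring

lemma lintegral_insertNth {α : Type*} [MeasurableSpace α] (μ : Measure α) [SigmaFinite μ]
    {n : ℕ} (k : Fin (n + 1)) {f : (Fin (n + 1) → α) → ℝ≥0∞} (hf : Measurable f) :
    ∫⁻ z, f z ∂Measure.pi (fun _ => μ)
      = ∫⁻ y, ∫⁻ t, f (k.insertNth t y) ∂μ ∂Measure.pi (fun _ => μ) := by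
  have e := (measurePreserving_piFinSuccAbove (fun _ => μ) k).symm
  rw [← e.lintegral_comp hf]
  exact lintegral_prod_symm' (fun p => f (k.insertNth p.1 p.2)) (hf.comp e.measurable)

lemma lintegral_fin_prod_eq_pow {α : Type*} [MeasurableSpace α] (μ : Measure α) [SigmaFinite μ]
    {h : α → ℝ≥0∞} (hh : Measurable h) (n : ℕ) :
    ∫⁻ z, ∏ i, h (z i) ∂Measure.pi (fun _ : Fin n => μ) = (∫⁻ t, h t ∂μ) ^ n := by
  induction n with
  | zero => simp
  | succ n ih =>
    rw [lintegral_insertNth μ 0 (by fun_prop)]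
    simp_rw [Fin.prod_univ_succ, Fin.insertNth_apply_same, Fin.insertNth_zero', Fin.cons_succ,
      lintegral_mul_const _ hh]
    rw [lintegral_const_mul _ (by fun_prop), ih, pow_succ']

lemma abs_sub_le_sqrt_mul_sqrt (a b : ℝ) : |a - b| ≤ √(1 + a ^ 2) * √(1 + b ^ 2) := by
  rw [← Real.sqrt_mul (by positivity)]
  exact Real.abs_le_sqrt (by nlinarith [sq_nonneg (1 + a * b)])

lemma edist_le_bracket_mul (a b : ℝ) : edist a b ≤ bracket a * bracket b := by
  rw [edist_eq_ofReal_abs_sub, bracket, bracket, ← ENNReal.ofReal_mul (Real.sqrt_nonneg _)]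
  exact ENNReal.ofReal_le_ofReal (abs_sub_le_sqrt_mul_sqrt a b)

lemma prod_edist_rpow_le {β : ℝ} (hβ : 0 ≤ β) {n : ℕ} (y : Fin n → ℝ) (t : ℝ) :
    ∏ j, edist (y j) t ^ β ≤ (∏ j, bracket (y j) ^ β) * bracket t ^ (β * n) := by
  calc ∏ j, edist (y j) t ^ β ≤ ∏ j, bracket (y j) ^ β * bracket t ^ β :=
        prod_le_prod' fun j _ => (ENNReal.rpow_le_rpow (edist_le_bracket_mul _ _) hβ).trans_eq
          (ENNReal.mul_rpow_of_nonneg _ _ hβ)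
    _ = (∏ j, bracket (y j) ^ β) * bracket t ^ (β * n) := by
        rw [prod_mul_distrib, prod_const, card_univ, Fintype.card_fin, ENNReal.rpow_mul,
          ENNReal.rpow_natCast]

lemma vandermonde_le {β : ℝ} (hβ : 0 ≤ β) {m : ℕ} (z : Fin m → ℝ) :
    vandermonde β z ≤ (∏ i, bracket (z i) ^ β) ^ (2 * m) := by
  calc vandermonde β z ≤ ∏ i, ∏ j ∈ Ioi i, bracket (z j) ^ β * bracket (z i) ^ β :=
        prod_le_prod' fun i _ => prod_le_prod' fun j _ =>
          (ENNReal.rpow_le_rpow (edist_le_bracket_mul _ _) hβ).trans_eq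
            (ENNReal.mul_rpow_of_nonneg _ _ hβ)
    _ ≤ ∏ i, ∏ j, bracket (z j) ^ β * bracket (z i) ^ β :=
        prod_le_prod' fun i _ => prod_le_prod_of_subset_of_one_le' (subset_univ _)
          fun j _ _ => one_le_mul (one_le_bracket_rpow _ hβ) (one_le_bracket_rpow _ hβ)
    _ = (∏ i, bracket (z i) ^ β) ^ (2 * m) := by
        simp only [prod_mul_distrib, prod_const, card_univ, Fintype.card_fin, prod_pow]
        ring

lemma sqrt_one_add_sq_mul_min_le {a t : ℝ} (ht : t ∈ Set.Icc (0 : ℝ) 1) :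
    √(1 + a ^ 2) * min 1 |a - t| ≤ 3 * |a - t| := by
  obtain ⟨ht0, ht1⟩ := ht
  rw [← pow_le_pow_iff_left₀ (by positivity) (by positivity) two_ne_zero, mul_pow, mul_pow,
    Real.sq_sqrt (by positivity)]
  rcases le_total 1 |a - t| with h | h
  · rw [min_eq_left h, sq_abs, one_pow, mul_one]
    have h1 : 1 ≤ (a - t) ^ 2 := by nlinarith [sq_abs (a - t)]
    nlinarith [sq_nonneg (a - 2 * t), mul_le_mul ht1 ht1 ht0 zero_le_one]
  · rw [min_eq_right h, sq_abs]
    have ha : a ^ 2 ≤ 8 := by nlinarith [abs_le.1 h]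
    nlinarith [sq_nonneg (a - t)]

lemma bracket_mul_min_le {a t : ℝ} (ht : t ∈ Set.Icc (0 : ℝ) 1) :
    bracket a * ENNReal.ofReal (min 1 |a - t|) ≤ 3 * edist a t := by
  rw [bracket, edist_eq_ofReal_abs_sub, ← ENNReal.ofReal_mul (Real.sqrt_nonneg _),
    show (3 : ℝ≥0∞) = ENNReal.ofReal 3 by simp, ← ENNReal.ofReal_mul (by norm_num)]
  exact ENNReal.ofReal_le_ofReal (sqrt_one_add_sq_mul_min_le ht)

lemma mul_log_le_of_le_div {V : ℝ → ℝ} {c x : ℝ} (hx : 1 ≤ x ^ 2)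
    (h : c ≤ V x / Real.log (1 + x ^ 2)) : c * Real.log (1 + x ^ 2) ≤ V x :=
  (le_div_iff₀ (Real.log_pos (by linarith))).1 h

lemma isLogConfining_of_tendsto {V : ℝ → ℝ} {v₀ : ℝ} (hv₀ : ∀ x, v₀ ≤ V x)
    (hVtop : Tendsto (fun x => V x / Real.log (1 + x ^ 2)) atTop atTop)
    (hVbot : Tendsto (fun x => V x / Real.log (1 + x ^ 2)) atBot atTop) :
    IsLogConfining V := by
  intro c hc
  obtain ⟨L₁, hL₁⟩ :=
    eventually_atTop.1 ((hVtop.eventually_ge_atTop c).and (eventually_ge_atTop 1))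
  obtain ⟨L₂, hL₂⟩ :=
    eventually_atBot.1 ((hVbot.eventually_ge_atTop c).and (eventually_le_atBot (-1)))
  set M₀ := c * Real.log (1 + (L₁ ^ 2 + L₂ ^ 2)) - v₀
  refine ⟨max 0 M₀, fun x => ?_⟩
  rcases le_or_gt L₁ x with hx | hx
  · obtain ⟨hquot, hx1⟩ := hL₁ x hx
    linarith [mul_log_le_of_le_div (by nlinarith) hquot, le_max_left 0 M₀]
  rcases le_or_gt x L₂ with hx' | hx'
  · obtain ⟨hquot, hx1⟩ := hL₂ x hx'
    linarith [mul_log_le_of_le_div (by nlinarith) hquot, le_max_left 0 M₀]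
  have hlog : Real.log (1 + x ^ 2) ≤ Real.log (1 + (L₁ ^ 2 + L₂ ^ 2)) :=
    Real.log_le_log (by positivity) (by rcases le_total 0 x with h | h <;> nlinarith)
  linarith [mul_le_mul_of_nonneg_left hlog hc, hv₀ x, le_max_right 0 M₀]

lemma IsLogConfining.lintegral_bracket_rpow_mul_gibbs_ne_top {V : ℝ → ℝ}
    (hV : IsLogConfining V) {c : ℝ} (hc : 0 ≤ c) :
    ∫⁻ t, bracket t ^ c * gibbs V t ≠ ∞ := by
  obtain ⟨M, hM⟩ := hV (c / 2 + 1) (by positivity)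
  have hpt : ∀ t, bracket t ^ c * gibbs V t ≤ ENNReal.ofReal (Real.exp M * (1 + t ^ 2)⁻¹) := by
    intro t
    have hpos : 0 < 1 + t ^ 2 := by positivity
    have hreal : √(1 + t ^ 2) ^ c * Real.exp (-V t) ≤ Real.exp M * (1 + t ^ 2)⁻¹ := by
      rw [Real.sqrt_eq_rpow, ← Real.rpow_mul hpos.le, Real.rpow_def_of_pos hpos,
        ← Real.exp_add, ← Real.exp_log hpos, ← Real.exp_neg, ← Real.exp_add, Real.log_exp]
      exact Real.exp_le_exp.2 (by linarith [hM t])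
    rw [bracket, gibbs, ENNReal.ofReal_rpow_of_nonneg (Real.sqrt_nonneg _) hc,
      ← ENNReal.ofReal_mul (by positivity)]
    exact ENNReal.ofReal_le_ofReal hreal
  exact ne_top_of_le_ne_top (integrable_inv_one_add_sq.const_mul _).lintegral_lt_top.ne
    (lintegral_mono hpt)

lemma IsLogConfining.lintegral_density_ne_top {V : ℝ → ℝ} (hV : IsLogConfining V)
    (hVmeas : Measurable V) {β : ℝ} (hβ : 0 ≤ β) (m : ℕ) :
    ∫⁻ z : Fin m → ℝ, density V β z ≠ ∞ := by
  have hle : ∀ z : Fin m → ℝ,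
      density V β z ≤ ∏ i, bracket (z i) ^ (β * (2 * m : ℕ)) * gibbs V (z i) := fun z => by
    simp_rw [prod_mul_distrib, ENNReal.rpow_mul, ENNReal.rpow_natCast, prod_pow]
    exact mul_le_mul_left (vandermonde_le hβ z) _
  refine ne_top_of_le_ne_top ?_ (lintegral_mono hle)
  rw [volume_pi, lintegral_fin_prod_eq_pow _
    (h := fun t => bracket t ^ (β * (2 * m : ℕ)) * gibbs V t) (by fun_prop)]
  exact ENNReal.pow_ne_top (hV.lintegral_bracket_rpow_mul_gibbs_ne_top (by positivity))

lemma density_ne_zero (V : ℝ → ℝ) (β : ℝ) {m : ℕ} {z : Fin m → ℝ}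
    (hz : Function.Injective z) : density V β z ≠ 0 := by
  refine mul_ne_zero (prod_ne_zero_iff.2 fun i _ => prod_ne_zero_iff.2 fun j hj => ?_)
    (prod_ne_zero_iff.2 fun i _ => gibbs_ne_zero V _)
  have hne : z j ≠ z i := hz.ne (mem_Ioi.1 hj).ne'
  simp [ENNReal.rpow_eq_zero_iff, edist_ne_top, hne]

lemma lintegral_density_ne_zero {V : ℝ → ℝ} (hV : Measurable V) (β : ℝ) (m : ℕ) :
    ∫⁻ z : Fin m → ℝ, density V β z ≠ 0 := by
  set box : Set (Fin m → ℝ) := Set.univ.pi fun i => Set.Ioo (i : ℝ) (i + 1)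
  have hbox : box ⊆ {z | density V β z ≠ 0} := fun z hz => by
    refine density_ne_zero V β (StrictMono.injective fun i j hij => ?_)
    have hij' : (i : ℝ) + 1 ≤ j := by exact_mod_cast hij
    linarith [(hz i trivial).2, (hz j trivial).1]
  have hvol : volume box = 1 := by simp [box, volume_pi_pi]
  rw [Ne, lintegral_eq_zero_iff (measurable_density hV β m), EventuallyEq, ae_iff]
  intro h
  simpa [hvol] using measure_mono_null hbox h

lemma exists_lt_measure_inter_preimage_Iic {α : Type*} [MeasurableSpace α] (μ : Measure α)
    (f : α → ℝ) {s : Set α} {c : ℝ≥0∞} (hc : c < μ s) :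
    ∃ m : ℝ, c < μ (s ∩ f ⁻¹' Set.Iic m) := by
  have hunion : s = ⋃ m : ℕ, s ∩ f ⁻¹' Set.Iic (m : ℝ) := by
    ext x
    simpa using fun _ => exists_nat_ge (f x)
  have hmono : Monotone fun m : ℕ => s ∩ f ⁻¹' Set.Iic (m : ℝ) := fun a b hab =>
    Set.inter_subset_inter_right _ fun x (hx : f x ≤ a) => show f x ≤ b from
      hx.trans (by exact_mod_cast hab)
  rw [hunion, hmono.measure_iUnion] at hc
  obtain ⟨m, hm⟩ := lt_iSup_iff.1 hc
  exact ⟨m, hm⟩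

lemma measure_le_measure_inter_lt_add_div {α : Type*} [MeasurableSpace α] (μ : Measure α)
    (s : Set α) {f : α → ℝ≥0∞} (hf : AEMeasurable f (μ.restrict s)) {r : ℝ≥0∞}
    (hr0 : r ≠ 0) (hr : r ≠ ∞) :
    μ s ≤ μ (s ∩ {x | f x < r}) + (∫⁻ x in s, f x ∂μ) / r := by
  have hcover : s ⊆ (s ∩ {x | f x < r}) ∪ ({x | r ≤ f x} ∩ s) := fun x hx => by
    rcases lt_or_ge (f x) r with h | h
    exacts [Or.inl ⟨hx, h⟩, Or.inr ⟨h, hx⟩]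
  calc μ s ≤ μ (s ∩ {x | f x < r}) + μ ({x | r ≤ f x} ∩ s) :=
        (measure_mono hcover).trans (measure_union_le _ _)
    _ ≤ μ (s ∩ {x | f x < r}) + (∫⁻ x in s, f x ∂μ) / r := by
        gcongr
        exact (Measure.le_restrict_apply _ _).trans (meas_ge_le_lintegral_div hf hr0 hr)

lemma negLogTrunc_nonneg (u : ℝ) : 0 ≤ negLogTrunc u :=
  neg_nonneg.2 (Real.log_nonpos (le_min zero_le_one (abs_nonneg u)) (min_le_left _ _))

lemma integrable_negLogTrunc : Integrable negLogTrunc := by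
  have heq : negLogTrunc = (Set.Icc (-1 : ℝ) 1).indicator fun u => -Real.log u := by
    ext u
    by_cases hu : u ∈ Set.Icc (-1 : ℝ) 1
    · rw [Set.indicator_of_mem hu, negLogTrunc, min_eq_right (abs_le.2 hu), Real.log_abs]
    · rw [Set.indicator_of_notMem hu, negLogTrunc, min_eq_left, Real.log_one, neg_zero]
      exact (not_le.1 (mt abs_le.1 hu)).le
  rw [heq, integrable_indicator_iff measurableSet_Icc]
  exact ((intervalIntegrable_iff_integrableOn_Icc_of_le (by norm_num)).1
    intervalIntegral.intervalIntegrable_log').neg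

lemma min_rpow_eq_exp {u : ℝ} (hu : u ≠ 0) (β : ℝ) :
    min 1 |u| ^ β = Real.exp (-(β * negLogTrunc u)) := by
  rw [Real.rpow_def_of_pos (lt_min one_pos (abs_pos.2 hu)), negLogTrunc, mul_neg, neg_neg,
    mul_comm]

lemma bracket_rpow_mul_exp_le {a t : ℝ} (ht : t ∈ Set.Icc (0 : ℝ) 1) (hne : a ≠ t) {β : ℝ}
    (hβ : 0 ≤ β) :
    bracket a ^ β * ENNReal.ofReal (Real.exp (-(β * negLogTrunc (a - t))))
      ≤ 3 ^ β * edist a t ^ β := by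
  rw [← min_rpow_eq_exp (sub_ne_zero.2 hne),
    ← ENNReal.ofReal_rpow_of_nonneg (le_min zero_le_one (abs_nonneg _)) hβ,
    ← ENNReal.mul_rpow_of_nonneg _ _ hβ, ← ENNReal.mul_rpow_of_nonneg _ _ hβ]
  exact ENNReal.rpow_le_rpow (bracket_mul_min_le ht) hβ

lemma prod_bracket_rpow_mul_exp_le {t : ℝ} (ht : t ∈ Set.Icc (0 : ℝ) 1) {n : ℕ}
    {y : Fin n → ℝ} (hy : ∀ j, y j ≠ t) {β : ℝ} (hβ : 0 ≤ β) :
    (∏ j, bracket (y j) ^ β) * ENNReal.ofReal (Real.exp (-∑ j, β * negLogTrunc (y j - t)))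
      ≤ 3 ^ (β * n) * ∏ j, edist (y j) t ^ β := by
  rw [← sum_neg_distrib, Real.exp_sum,
    ENNReal.ofReal_prod_of_nonneg fun _ _ => (Real.exp_pos _).le, ← prod_mul_distrib,
    ENNReal.rpow_mul, ENNReal.rpow_natCast,
    show ((3 : ℝ≥0∞) ^ β) ^ n = ∏ _j : Fin n, (3 : ℝ≥0∞) ^ β by simp, ← prod_mul_distrib]
  exact prod_le_prod' fun j _ => bracket_rpow_mul_exp_le ht (hy j) hβ

lemma setLIntegral_ofReal_sum_negLogTrunc_le (s : Set ℝ) {β : ℝ} (hβ : 0 ≤ β) {n : ℕ}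
    (y : Fin n → ℝ) :
    ∫⁻ t in s, ENNReal.ofReal (∑ j, β * negLogTrunc (y j - t))
      ≤ ENNReal.ofReal (β * n) * ∫⁻ u, ENNReal.ofReal (negLogTrunc u) := by
  calc ∫⁻ t in s, ENNReal.ofReal (∑ j, β * negLogTrunc (y j - t))
      ≤ ∫⁻ t, ∑ j, ENNReal.ofReal β * ENNReal.ofReal (negLogTrunc (y j - t)) := by
        refine (setLIntegral_le_lintegral _ _).trans_eq (lintegral_congr fun t => ?_)
        rw [ENNReal.ofReal_sum_of_nonneg fun j _ => mul_nonneg hβ (negLogTrunc_nonneg _)]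
        exact sum_congr rfl fun j _ => ENNReal.ofReal_mul hβ
    _ = ENNReal.ofReal (β * n) * ∫⁻ u, ENNReal.ofReal (negLogTrunc u) := by
        rw [lintegral_finsetSum' _ fun j _ => by unfold negLogTrunc; fun_prop]
        simp_rw [lintegral_const_mul' _ _ ENNReal.ofReal_ne_top,
          lintegral_sub_left_eq_self (fun u => ENNReal.ofReal (negLogTrunc u))]
        rw [sum_const, card_univ, Fintype.card_fin, nsmul_eq_mul, ENNReal.ofReal_mul hβ,
          ENNReal.ofReal_natCast]
        ring

/- The threshold `4 (κ ∫ negLogTrunc + 1)` makes the Markov bound on the exceptional set at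
most `1/4`. -/
lemma le_volume_sublevel_sum_negLogTrunc {S : Set ℝ} (hS : 2⁻¹ < volume S) {κ β : ℝ}
    (hβ : 0 ≤ β) {n : ℕ} (hβn : β * n ≤ κ) (y : Fin n → ℝ) :
    2⁻¹ - 4⁻¹ ≤ volume ((S ∩ {t | ENNReal.ofReal (∑ j, β * negLogTrunc (y j - t))
      < 4 * (ENNReal.ofReal κ * (∫⁻ u, ENNReal.ofReal (negLogTrunc u)) + 1)})
        \ Set.range y) := by
  have hc₁ : ∫⁻ u, ENNReal.ofReal (negLogTrunc u) ≠ ∞ :=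
    integrable_negLogTrunc.lintegral_lt_top.ne
  rw [measure_sdiff_null ((Set.finite_range y).measure_zero volume), tsub_le_iff_right]
  refine hS.le.trans ((measure_le_measure_inter_lt_add_div volume S
    (by unfold negLogTrunc; fun_prop) (mul_ne_zero (by norm_num) (by simp))
    (ENNReal.mul_ne_top (by norm_num) (ENNReal.add_ne_top.2
      ⟨ENNReal.mul_ne_top ENNReal.ofReal_ne_top hc₁, ENNReal.one_ne_top⟩))).trans
    (add_le_add_right ?_ _))
  refine ENNReal.div_le_of_le_mul ((setLIntegral_ofReal_sum_negLogTrunc_le S hβ y).trans ?_)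
  rw [← mul_assoc, ENNReal.inv_mul_cancel (by norm_num) (by norm_num), one_mul]
  exact le_add_right (by gcongr)

lemma exp_mul_prod_bracket_rpow_le {V : ℝ → ℝ} {κ β m R t : ℝ} (hβ : 0 ≤ β) {n : ℕ}
    (hβn : β * n ≤ κ) {y : Fin n → ℝ} (ht : t ∈ Set.Icc (0 : ℝ) 1) (hy : ∀ j, y j ≠ t)
    (hVt : V t ≤ m) (hΨt : ∑ j, β * negLogTrunc (y j - t) ≤ R) :
    ENNReal.ofReal (Real.exp (-(R + m))) * ∏ j, bracket (y j) ^ β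
      ≤ 3 ^ κ * ((∏ j, edist (y j) t ^ β) * gibbs V t) := by
  have hE : ENNReal.ofReal (Real.exp (-(R + m)))
      ≤ ENNReal.ofReal (Real.exp (-∑ j, β * negLogTrunc (y j - t))) * gibbs V t := by
    rw [gibbs, ← ENNReal.ofReal_mul (Real.exp_pos _).le, ← Real.exp_add]
    exact ENNReal.ofReal_le_ofReal (Real.exp_le_exp.2 (by linarith))
  calc ENNReal.ofReal (Real.exp (-(R + m))) * ∏ j, bracket (y j) ^ β
      ≤ ((∏ j, bracket (y j) ^ β)
          * ENNReal.ofReal (Real.exp (-∑ j, β * negLogTrunc (y j - t)))) * gibbs V t := by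
        rw [mul_comm, mul_assoc]; gcongr
    _ ≤ (3 ^ (β * n) * ∏ j, edist (y j) t ^ β) * gibbs V t :=
        mul_le_mul_left (prod_bracket_rpow_mul_exp_le ht hy hβ) _
    _ ≤ 3 ^ κ * ((∏ j, edist (y j) t ^ β) * gibbs V t) := by
        rw [mul_assoc]
        gcongr
        norm_num

lemma exists_lintegral_prod_edist_ge {V : ℝ → ℝ} (hV : Measurable V) (κ : ℝ) :
    ∃ c : ℝ≥0∞, c ≠ 0 ∧ c ≠ ∞ ∧ ∀ (n : ℕ) (β : ℝ), 0 ≤ β → β * n ≤ κ →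
      ∀ y : Fin n → ℝ, c * ∏ j, bracket (y j) ^ β
        ≤ ∫⁻ t, (∏ j, edist (y j) t ^ β) * gibbs V t := by
  obtain ⟨m, hm⟩ := exists_lt_measure_inter_preimage_Iic volume V (s := Set.Icc (0 : ℝ) 1)
    (c := 2⁻¹) (by simp)
  set r : ℝ≥0∞ := 4 * (ENNReal.ofReal κ * (∫⁻ u, ENNReal.ofReal (negLogTrunc u)) + 1)
  have hr : r ≠ ∞ := ENNReal.mul_ne_top (by norm_num) (ENNReal.add_ne_top.2
    ⟨ENNReal.mul_ne_top ENNReal.ofReal_ne_top integrable_negLogTrunc.lintegral_lt_top.ne,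
      ENNReal.one_ne_top⟩)
  have h3 : (3 : ℝ≥0∞) ^ κ ≠ 0 := by simp [ENNReal.rpow_eq_zero_iff]
  have h3' : (3 : ℝ≥0∞) ^ κ ≠ ∞ := by simp [ENNReal.rpow_eq_top_iff]
  set E := ENNReal.ofReal (Real.exp (-(r.toReal + m)))
  refine ⟨(2⁻¹ - 4⁻¹) * ((3 ^ κ)⁻¹ * E), mul_ne_zero ?_ ?_, by finiteness,
    fun n β hβ hβn y => ?_⟩
  · exact (tsub_pos_iff_lt.2 (ENNReal.inv_lt_inv.2 (by norm_num))).ne'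
  · exact mul_ne_zero (ENNReal.inv_ne_zero.2 h3') (ENNReal.ofReal_pos.2 (Real.exp_pos _)).ne'
  set G := (Set.Icc (0 : ℝ) 1 ∩ V ⁻¹' Set.Iic m ∩
    {t | ENNReal.ofReal (∑ j, β * negLogTrunc (y j - t)) < r}) \ Set.range y
  have hpt : ∀ t ∈ G, (3 ^ κ)⁻¹ * E * ∏ j, bracket (y j) ^ β
      ≤ (∏ j, edist (y j) t ^ β) * gibbs V t := by
    rintro t ⟨⟨⟨ht, hVt⟩, hΨt⟩, hty⟩
    rw [mul_assoc, ENNReal.inv_mul_le_iff h3 h3']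
    refine exp_mul_prod_bracket_rpow_le hβ hβn ht (fun j hj => hty ⟨j, hj⟩) hVt ?_
    exact ((ENNReal.ofReal_lt_iff_lt_toReal (sum_nonneg fun j _ =>
      mul_nonneg hβ (negLogTrunc_nonneg _)) hr).1 hΨt).le
  calc (2⁻¹ - 4⁻¹) * ((3 ^ κ)⁻¹ * E) * ∏ j, bracket (y j) ^ β
      = ((3 ^ κ)⁻¹ * E * ∏ j, bracket (y j) ^ β) * (2⁻¹ - 4⁻¹) := by ring
    _ ≤ ((3 ^ κ)⁻¹ * E * ∏ j, bracket (y j) ^ β) * volume G := by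
        gcongr
        exact le_volume_sublevel_sum_negLogTrunc hm hβ hβn y
    _ = ∫⁻ _ in G, (3 ^ κ)⁻¹ * E * ∏ j, bracket (y j) ^ β := (setLIntegral_const _ _).symm
    _ ≤ ∫⁻ t in G, (∏ j, edist (y j) t ^ β) * gibbs V t :=
        setLIntegral_mono (by fun_prop) hpt
    _ ≤ ∫⁻ t, (∏ j, edist (y j) t ^ β) * gibbs V t := setLIntegral_le_lintegral _ _

lemma IsLogConfining.exists_lintegral_bracket_rpow_mul_le {V : ℝ → ℝ} (hV : IsLogConfining V)
    (hVmeas : Measurable V) {κ : ℝ} (hκ : 0 ≤ κ) :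
    ∃ D : ℝ≥0∞, D ≠ ∞ ∧ ∀ (n : ℕ) (β : ℝ), 0 ≤ β → β * n ≤ κ → ∀ y : Fin n → ℝ,
      ∫⁻ t, bracket t ^ (2 * κ) * ((∏ j, edist (y j) t ^ β) * gibbs V t)
        ≤ D * ∫⁻ t, (∏ j, edist (y j) t ^ β) * gibbs V t := by
  obtain ⟨c, hc0, hctop, hc⟩ := exists_lintegral_prod_edist_ge hVmeas κ
  set A := ∫⁻ t, bracket t ^ (3 * κ) * gibbs V t
  have hA : A ≠ ∞ := hV.lintegral_bracket_rpow_mul_gibbs_ne_top (by positivity)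
  refine ⟨A * c⁻¹, ENNReal.mul_ne_top hA (ENNReal.inv_ne_top.2 hc0),
    fun n β hβ hβn y => ?_⟩
  set P := ∏ j, bracket (y j) ^ β
  have hpt : ∀ t, bracket t ^ (2 * κ) * ((∏ j, edist (y j) t ^ β) * gibbs V t)
      ≤ P * (bracket t ^ (3 * κ) * gibbs V t) := fun t => by
    calc bracket t ^ (2 * κ) * ((∏ j, edist (y j) t ^ β) * gibbs V t)
        ≤ bracket t ^ (2 * κ) * ((P * bracket t ^ (β * n)) * gibbs V t) := by
          gcongr; exact prod_edist_rpow_le hβ y t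
      _ = P * (bracket t ^ (2 * κ + β * n) * gibbs V t) := by
          rw [ENNReal.rpow_add_of_nonneg _ _ (by linarith) (by positivity)]; ring
      _ ≤ P * (bracket t ^ (3 * κ) * gibbs V t) := by
          gcongr
          exacts [one_le_bracket t, by linarith]
  calc ∫⁻ t, bracket t ^ (2 * κ) * ((∏ j, edist (y j) t ^ β) * gibbs V t)
      ≤ P * A := (lintegral_mono hpt).trans_eq (lintegral_const_mul' _ _
        (ENNReal.prod_ne_top fun j _ => ENNReal.rpow_ne_top_of_nonneg hβ (bracket_ne_top _)))
    _ = A * c⁻¹ * (c * P) := by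
        rw [mul_assoc, ← mul_assoc c⁻¹, ENNReal.inv_mul_cancel hc0 hctop, one_mul, mul_comm]
    _ ≤ A * c⁻¹ * ∫⁻ t, (∏ j, edist (y j) t ^ β) * gibbs V t := by
        gcongr; exact hc n β hβ hβn y

lemma lintegral_bracket_rpow_mul_density_le {V : ℝ → ℝ} (hV : Measurable V) {β c : ℝ}
    (hβ : 0 ≤ β) {n : ℕ} {D : ℝ≥0∞} (hD : D ≠ ∞)
    (hcond : ∀ y : Fin n → ℝ,
      ∫⁻ t, bracket t ^ c * ((∏ j, edist (y j) t ^ β) * gibbs V t)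
        ≤ D * ∫⁻ t, (∏ j, edist (y j) t ^ β) * gibbs V t) (k : Fin (n + 1)) :
    ∫⁻ z : Fin (n + 1) → ℝ, bracket (z k) ^ c * density V β z
      ≤ D * ∫⁻ z : Fin (n + 1) → ℝ, density V β z := by
  rw [volume_pi, lintegral_insertNth _ k (by fun_prop), lintegral_insertNth _ k (by fun_prop)]
  simp only [Fin.insertNth_apply_same]
  have hslice : ∀ (g : ℝ → ℝ≥0∞) (y : Fin n → ℝ),
      ∫⁻ t, g t * density V β (k.insertNth t y)
        = (∫⁻ t, g t * ((∏ j, edist (y j) t ^ β) * gibbs V t)) * density V β y := fun g y => by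
    rw [← lintegral_mul_const' _ _ (density_ne_top V hβ y)]
    simp_rw [density_insertNth V hβ, mul_assoc]
  calc ∫⁻ y, ∫⁻ t, bracket t ^ c * density V β (k.insertNth t y) ∂volume ∂volume
      = ∫⁻ y, (∫⁻ t, bracket t ^ c * ((∏ j, edist (y j) t ^ β) * gibbs V t))
          * density V β y := lintegral_congr fun y => hslice _ y
    _ ≤ ∫⁻ y, D * ((∫⁻ t, (∏ j, edist (y j) t ^ β) * gibbs V t) * density V β y) :=
        lintegral_mono fun y => by rw [← mul_assoc]; exact mul_le_mul_left (hcond y) _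
    _ = D * ∫⁻ y, ∫⁻ t, density V β (k.insertNth t y) := by
        rw [lintegral_const_mul' D _ hD]
        congr 1
        simpa using (lintegral_congr fun y => hslice (fun _ => 1) y).symm

lemma ofReal_Zpart {V : ℝ → ℝ} (hV : Measurable V) {β : ℝ} (hβ : 0 ≤ β) {N : ℕ}
    (hZ : ∫⁻ z : Fin N → ℝ, density V β z ≠ ∞) :
    ENNReal.ofReal (Zpart V β N) = ∫⁻ z : Fin N → ℝ, density V β z := by
  have hmeas : Measurable (betaWeight V β N) := by unfold betaWeight; fun_prop
  rw [Zpart, integral_eq_lintegral_of_nonneg_ae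
    (.of_forall fun z => by unfold betaWeight; positivity) hmeas.aestronglyMeasurable]
  simp_rw [ofReal_betaWeight V hβ]
  exact ENNReal.ofReal_toReal hZ

lemma lintegral_betaMeasure {V : ℝ → ℝ} (hV : Measurable V) {β : ℝ} (hβ : 0 ≤ β)
    {N : ℕ} (hZ : ∫⁻ z : Fin N → ℝ, density V β z ≠ ∞) (f : (Fin N → ℝ) → ℝ≥0∞) :
    ∫⁻ z, f z ∂betaMeasure V β N
      = (∫⁻ z : Fin N → ℝ, density V β z)⁻¹ * ∫⁻ z, density V β z * f z := by
  rw [betaMeasure, lintegral_smul_measure, ofReal_Zpart hV hβ hZ]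
  simp_rw [ofReal_betaWeight V hβ]
  rw [lintegral_withDensity_eq_lintegral_mul_non_measurable _ (measurable_density hV β N)
    (.of_forall fun z => (density_ne_top V hβ z).lt_top)]
  rfl

lemma isProbabilityMeasure_betaMeasure {V : ℝ → ℝ} (hV : Measurable V) {β : ℝ}
    (hβ : 0 ≤ β) {N : ℕ} (hZ : ∫⁻ z : Fin N → ℝ, density V β z ≠ ∞) :
    IsProbabilityMeasure (betaMeasure V β N) := by
  constructor
  rw [← setLIntegral_one, setLIntegral_univ, lintegral_betaMeasure hV hβ hZ]
  simp_rw [mul_one]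
  exact ENNReal.inv_mul_cancel (lintegral_density_ne_zero hV β N) hZ

lemma lintegral_prod_rpow_inv_card_le {α ι : Type*} [MeasurableSpace α] [Fintype ι]
    [Nonempty ι] (μ : Measure α) {f : ι → α → ℝ≥0∞} (hf : ∀ i, AEMeasurable (f i) μ)
    {D : ℝ≥0∞} (hD : ∀ i, ∫⁻ a, f i a ∂μ ≤ D) :
    ∫⁻ a, ∏ i, f i a ^ (Fintype.card ι : ℝ)⁻¹ ∂μ ≤ D := by
  have hcard : (Fintype.card ι : ℝ) ≠ 0 := Nat.cast_ne_zero.2 Fintype.card_ne_zero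
  calc ∫⁻ a, ∏ i, f i a ^ (Fintype.card ι : ℝ)⁻¹ ∂μ
      ≤ ∏ i, (∫⁻ a, f i a ∂μ) ^ (Fintype.card ι : ℝ)⁻¹ :=
        ENNReal.lintegral_prod_norm_pow_le _ (fun i _ => hf i)
          (by simp [card_univ, hcard]) (fun i _ => by positivity)
    _ ≤ ∏ _i : ι, D ^ (Fintype.card ι : ℝ)⁻¹ :=
        prod_le_prod' fun i _ => ENNReal.rpow_le_rpow (hD i) (by positivity)
    _ = D := by
        rw [prod_const, card_univ, ← ENNReal.rpow_natCast, ← ENNReal.rpow_mul,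
          inv_mul_cancel₀ hcard, ENNReal.rpow_one]

lemma IsLogConfining.exists_lintegral_prod_bracket_rpow_le {V : ℝ → ℝ}
    (hV : IsLogConfining V) (hVmeas : Measurable V) {κ : ℝ} (hκ : 0 ≤ κ) :
    ∃ D : ℝ≥0∞, D ≠ ∞ ∧ ∀ (β : ℝ) (N : ℕ), 0 < β → β * N ≤ κ →
      ∫⁻ z, ∏ i, bracket (z i) ^ (2 * β) ∂betaMeasure V β N ≤ D := by
  obtain ⟨D, hD, hcond⟩ := hV.exists_lintegral_bracket_rpow_mul_le hVmeas hκ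
  refine ⟨max D 1, by simp [hD], fun β N hβ hβN => ?_⟩
  have hZ := hV.lintegral_density_ne_top hVmeas hβ.le N
  have := isProbabilityMeasure_betaMeasure hVmeas hβ.le hZ
  rcases N with _ | n
  · simp
  have hcoord : ∀ k, ∫⁻ z, bracket (z k) ^ (2 * κ) ∂betaMeasure V β (n + 1) ≤ D := fun k => by
    rw [lintegral_betaMeasure hVmeas hβ.le hZ,
      ENNReal.inv_mul_le_iff (lintegral_density_ne_zero hVmeas β _) hZ]
    simp_rw [mul_comm (density V β _)]
    refine (lintegral_bracket_rpow_mul_density_le hVmeas hβ.le hD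
      (hcond n β hβ.le ?_) k).trans_eq (mul_comm _ _)
    push_cast at hβN
    nlinarith
  have hpt : ∀ (z : Fin (n + 1) → ℝ) i, bracket (z i) ^ (2 * β)
      ≤ (bracket (z i) ^ (2 * κ)) ^ (Fintype.card (Fin (n + 1)) : ℝ)⁻¹ := by
    intro z i
    rw [← ENNReal.rpow_mul]
    refine ENNReal.rpow_le_rpow_of_exponent_le (one_le_bracket _) ?_
    rw [Fintype.card_fin, ← div_eq_mul_inv, le_div_iff₀ (by positivity)]
    linarith
  calc ∫⁻ z, ∏ i, bracket (z i) ^ (2 * β) ∂betaMeasure V β (n + 1)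
      ≤ ∫⁻ z, ∏ i, (bracket (z i) ^ (2 * κ)) ^ (Fintype.card (Fin (n + 1)) : ℝ)⁻¹
          ∂betaMeasure V β (n + 1) :=
        lintegral_mono fun z => prod_le_prod' fun i _ => hpt z i
    _ ≤ D := lintegral_prod_rpow_inv_card_le _ (fun i =>
        ((measurable_bracket.comp (measurable_pi_apply i)).pow_const _).aemeasurable) hcoord
    _ ≤ max D 1 := le_max_left _ _

lemma ofReal_prod_abs_sub_rpow_sq {β : ℝ} (hβ : 0 ≤ β) {N : ℕ} (z : Fin N → ℝ) (x : ℝ) :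
    ENNReal.ofReal ((∏ i, |x - z i| ^ β) ^ 2) = ∏ i, edist (z i) x ^ (2 * β) := by
  rw [ENNReal.ofReal_pow (by positivity), ENNReal.ofReal_prod_of_nonneg fun _ _ => by positivity,
    ← prod_pow]
  refine prod_congr rfl fun i _ => ?_
  rw [← ENNReal.ofReal_rpow_of_nonneg (abs_nonneg _) hβ, edist_eq_ofReal_abs_sub, abs_sub_comm,
    ← ENNReal.rpow_natCast, ← ENNReal.rpow_mul, mul_comm]
  norm_num

end BetaEnsemble

open BetaEnsemble

theorem stmt9
    (V : ℝ → ℝ) (hVmeas : Measurable V) (hVbdd : BddBelow (Set.range V))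
    (hVtop : Tendsto (fun x => V x / Real.log (1 + x ^ 2)) atTop atTop)
    (hVbot : Tendsto (fun x => V x / Real.log (1 + x ^ 2)) atBot atTop)
    (κ : ℝ) (hκ : 0 < κ) (K : Set ℝ) (hK : IsCompact K) :
    ∃ B : ℝ, ∀ (β : ℝ) (N : ℕ) (x : ℝ), 0 < β → β * N ≤ κ → x ∈ K →
      (∫ lam, (∏ i : Fin N, |x - lam i| ^ β) ^ 2 ∂(betaMeasure V β N)) ≤ B := by
  obtain ⟨v₀, hv₀⟩ := hVbdd
  have hconf := isLogConfining_of_tendsto (fun x => hv₀ ⟨x, rfl⟩) hVtop hVbot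
  obtain ⟨D, hD, hmoment⟩ := hconf.exists_lintegral_prod_bracket_rpow_le hVmeas hκ.le
  obtain ⟨R, hR⟩ := hK.isBounded.exists_norm_le
  have hRtop : bracket R ^ (2 * κ) ≠ ∞ :=
    ENNReal.rpow_ne_top_of_nonneg (by positivity) (bracket_ne_top R)
  refine ⟨(bracket R ^ (2 * κ) * D).toReal, fun β N x hβ hβN hx => ?_⟩
  rw [integral_eq_lintegral_of_nonneg_ae (.of_forall fun z => by positivity)
    (by fun_prop : Measurable _).aestronglyMeasurable]
  refine ENNReal.toReal_mono (ENNReal.mul_ne_top hRtop hD) ?_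
  have hxR : bracket x ^ (2 * β * N) ≤ bracket R ^ (2 * κ) :=
    (ENNReal.rpow_le_rpow (bracket_le_bracket (hR x hx)) (by positivity)).trans
      (ENNReal.rpow_le_rpow_of_exponent_le (one_le_bracket R) (by linarith))
  calc ∫⁻ z, ENNReal.ofReal ((∏ i, |x - z i| ^ β) ^ 2) ∂betaMeasure V β N
      ≤ ∫⁻ z, bracket R ^ (2 * κ) * ∏ i, bracket (z i) ^ (2 * β) ∂betaMeasure V β N := by
        refine lintegral_mono fun z => ?_
        rw [ofReal_prod_abs_sub_rpow_sq hβ.le]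
        refine (prod_edist_rpow_le (by positivity) z x).trans ?_
        rw [mul_comm]
        gcongr
    _ ≤ bracket R ^ (2 * κ) * D := by
        rw [lintegral_const_mul' _ _ hRtop]
        gcongr
        exact hmoment β N hβ hβN
end
end
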